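/- arXiv:2104.08831 — 7 statements merged into one kernel-verified Lean document; each statement's English description precedes it below -/
import Mathlib

section
/- For all s, t ≥ 0, one has min(s^{1+a₀}, s^{1+a₁})·A(t)/(1 + a₁) ≤ A(s·t) ≤ (1 + a₁)·max(s^{1+a₀}, s^{1+a₁})·A(t). -/
/-!
The condition `a₀ ≤ t a'(t)/a(t) ≤ a₁` says that `t ↦ a(t) t^{-a₀}` is nondecreasing and
`t ↦ a(t) t^{-a₁}` is nonincreasing on `(0, ∞)`. Comparing these at `v` and `s v` gives
`min(s^{a₀}, s^{a₁}) a(v) ≤ a(s v) ≤ max(s^{a₀}, s^{a₁}) a(v)`, and integrating over `v ∈ [0, t]`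
after the substitution `A(s t) = s ∫₀ᵗ a(s v) dv` yields the estimate even without the
factors `1 + a₁`.
-/

open Real MeasureTheory Set

section PowerWeights

variable {a : ℝ → ℝ} {p x : ℝ}

lemma hasDerivAt_mul_rpow_neg (ha : DifferentiableAt ℝ a x) (hx : 0 < x) :
    HasDerivAt (fun t => a t * t ^ (-p)) (x ^ (-p - 1) * (x * deriv a x - p * a x)) x := by
  have hpow : HasDerivAt (fun t : ℝ => t ^ (-p)) (-p * x ^ (-p - 1)) x :=
    hasDerivAt_rpow_const (Or.inl hx.ne')
  have hxp : x ^ (-p) = x ^ (-p - 1) * x := by rw [← rpow_add_one hx.ne', sub_add_cancel]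
  exact (ha.hasDerivAt.mul hpow).congr_deriv (by rw [hxp]; ring)

lemma monotoneOn_mul_rpow_neg (ha : ∀ t ∈ Ioi (0 : ℝ), DifferentiableAt ℝ a t)
    (hp : ∀ t ∈ Ioi (0 : ℝ), p * a t ≤ t * deriv a t) :
    MonotoneOn (fun t => a t * t ^ (-p)) (Ioi 0) := by
  have hderiv x (hx : x ∈ Ioi (0 : ℝ)) := hasDerivAt_mul_rpow_neg (p := p) (ha x hx) hx
  refine monotoneOn_of_deriv_nonneg (convex_Ioi 0)
    (fun x hx => (hderiv x hx).continuousAt.continuousWithinAt)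
    (fun x hx => (hderiv x (interior_subset hx)).differentiableAt.differentiableWithinAt)
    fun x hx => ?_
  rw [interior_Ioi] at hx
  rw [(hderiv x hx).deriv]
  exact mul_nonneg (rpow_nonneg (le_of_lt hx) _) (sub_nonneg.2 (hp x hx))

lemma antitoneOn_mul_rpow_neg (ha : ∀ t ∈ Ioi (0 : ℝ), DifferentiableAt ℝ a t)
    (hp : ∀ t ∈ Ioi (0 : ℝ), t * deriv a t ≤ p * a t) :
    AntitoneOn (fun t => a t * t ^ (-p)) (Ioi 0) := by
  have hderiv x (hx : x ∈ Ioi (0 : ℝ)) := hasDerivAt_mul_rpow_neg (p := p) (ha x hx) hx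
  refine antitoneOn_of_deriv_nonpos (convex_Ioi 0)
    (fun x hx => (hderiv x hx).continuousAt.continuousWithinAt)
    (fun x hx => (hderiv x (interior_subset hx)).differentiableAt.differentiableWithinAt)
    fun x hx => ?_
  rw [interior_Ioi] at hx
  rw [(hderiv x hx).deriv]
  exact mul_nonpos_of_nonneg_of_nonpos (rpow_nonneg (le_of_lt hx) _) (sub_nonpos.2 (hp x hx))

end PowerWeights

section Scaling

variable {x y s v p : ℝ}

lemma mul_mul_rpow_neg_le_iff (hs : 0 < s) (hv : 0 < v) :
    x * (s * v) ^ (-p) ≤ y * v ^ (-p) ↔ x ≤ s ^ p * y := by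
  rw [mul_rpow hs.le hv.le, ← mul_assoc, mul_le_mul_iff_left₀ (rpow_pos_of_pos hv _),
    rpow_neg hs.le, ← div_eq_mul_inv, div_le_iff₀ (rpow_pos_of_pos hs _), mul_comm y]

lemma le_mul_mul_rpow_neg_iff (hs : 0 < s) (hv : 0 < v) :
    y * v ^ (-p) ≤ x * (s * v) ^ (-p) ↔ s ^ p * y ≤ x := by
  rw [mul_rpow hs.le hv.le, ← mul_assoc, mul_le_mul_iff_left₀ (rpow_pos_of_pos hv _),
    rpow_neg hs.le, ← div_eq_mul_inv, le_div_iff₀ (rpow_pos_of_pos hs _), mul_comm y]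

variable {a : ℝ → ℝ} {q : ℝ}

lemma min_rpow_mul_le_apply_mul
    (hq : MonotoneOn (fun t => a t * t ^ (-q)) (Ioi 0))
    (hp : AntitoneOn (fun t => a t * t ^ (-p)) (Ioi 0))
    (hs : 0 < s) (hv : 0 < v) (hav : 0 ≤ a v) :
    min (s ^ q) (s ^ p) * a v ≤ a (s * v) := by
  have hsv : 0 < s * v := mul_pos hs hv
  rcases le_total 1 s with hs1 | hs1
  · have := hq hv hsv (le_mul_of_one_le_left hv.le hs1)
    exact (mul_le_mul_of_nonneg_right (min_le_left _ _) hav).trans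
      ((le_mul_mul_rpow_neg_iff hs hv).1 this)
  · have := hp hsv hv (mul_le_of_le_one_left hv.le hs1)
    exact (mul_le_mul_of_nonneg_right (min_le_right _ _) hav).trans
      ((le_mul_mul_rpow_neg_iff hs hv).1 this)

lemma apply_mul_le_max_rpow_mul
    (hq : MonotoneOn (fun t => a t * t ^ (-q)) (Ioi 0))
    (hp : AntitoneOn (fun t => a t * t ^ (-p)) (Ioi 0))
    (hs : 0 < s) (hv : 0 < v) (hav : 0 ≤ a v) :
    a (s * v) ≤ max (s ^ q) (s ^ p) * a v := by
  have hsv : 0 < s * v := mul_pos hs hv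
  rcases le_total 1 s with hs1 | hs1
  · have := hp hv hsv (le_mul_of_one_le_left hv.le hs1)
    exact ((mul_mul_rpow_neg_le_iff hs hv).1 this).trans
      (mul_le_mul_of_nonneg_right (le_max_right _ _) hav)
  · have := hq hsv hv (mul_le_of_le_one_left hv.le hs1)
    exact ((mul_mul_rpow_neg_le_iff hs hv).1 this).trans
      (mul_le_mul_of_nonneg_right (le_max_left _ _) hav)

end Scaling

section Integral

variable {f : ℝ → ℝ} {s t : ℝ}

lemma intervalIntegrable_comp_mul_left_of_continuousOn_Ici (hf : ContinuousOn f (Ici 0))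
    (hs : 0 ≤ s) (ht : 0 ≤ t) : IntervalIntegrable (fun v => f (s * v)) volume 0 t := by
  apply ContinuousOn.intervalIntegrable
  rw [uIcc_of_le ht]
  exact hf.comp (continuous_const_mul s).continuousOn fun v hv => mul_nonneg hs hv.1

lemma integral_zero_mul_eq_mul_integral_comp_mul_left (s t : ℝ) :
    ∫ v in 0..s * t, f v = s * ∫ v in 0..t, f (s * v) := by
  simp

lemma mul_mul_integral_le_integral_mul (hf : ContinuousOn f (Ici 0)) (hs : 0 ≤ s) (ht : 0 ≤ t)
    {m : ℝ} (hm : ∀ v ∈ Ioo 0 t, m * f v ≤ f (s * v)) :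
    s * m * ∫ v in 0..t, f v ≤ ∫ v in 0..s * t, f v := by
  have hfint : IntervalIntegrable f volume 0 t :=
    (hf.mono (by rw [uIcc_of_le ht]; exact Icc_subset_Ici_self)).intervalIntegrable
  rw [integral_zero_mul_eq_mul_integral_comp_mul_left, mul_assoc,
    ← intervalIntegral.integral_const_mul m]
  exact mul_le_mul_of_nonneg_left (intervalIntegral.integral_mono_on_of_le_Ioo ht
    (hfint.const_mul m) (intervalIntegrable_comp_mul_left_of_continuousOn_Ici hf hs ht) hm) hs

lemma integral_mul_le_mul_mul_integral (hf : ContinuousOn f (Ici 0)) (hs : 0 ≤ s) (ht : 0 ≤ t)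
    {M : ℝ} (hM : ∀ v ∈ Ioo 0 t, f (s * v) ≤ M * f v) :
    ∫ v in 0..s * t, f v ≤ s * M * ∫ v in 0..t, f v := by
  have hfint : IntervalIntegrable f volume 0 t :=
    (hf.mono (by rw [uIcc_of_le ht]; exact Icc_subset_Ici_self)).intervalIntegrable
  rw [integral_zero_mul_eq_mul_integral_comp_mul_left, mul_assoc,
    ← intervalIntegral.integral_const_mul M]
  exact mul_le_mul_of_nonneg_left (intervalIntegral.integral_mono_on_of_le_Ioo ht
    (intervalIntegrable_comp_mul_left_of_continuousOn_Ici hf hs ht) (hfint.const_mul M) hM) hs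

end Integral

theorem stmt_3_general
    (a : ℝ → ℝ) (a₀ a₁ : ℝ)
    (ha_cont : ContinuousOn a (Set.Ici 0))
    (ha_diff : ∀ t ∈ Set.Ioi (0:ℝ), DifferentiableAt ℝ a t)
    (ha_zero : a 0 = 0)
    (ha_pos : ∀ t > 0, 0 < a t)
    (ha₁_gt : 1 < a₁)
    (hcond : ∀ t > 0, a₀ ≤ t * deriv a t / a t ∧ t * deriv a t / a t ≤ a₁)
    (A : ℝ → ℝ) (hA : ∀ t, A t = ∫ s in (0:ℝ)..t, a s) :
    ∀ s ≥ (0:ℝ), ∀ t ≥ (0:ℝ),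
      min (s ^ (1 + a₀)) (s ^ (1 + a₁)) * A t / (1 + a₁) ≤ A (s * t) ∧
      A (s * t) ≤ (1 + a₁) * max (s ^ (1 + a₀)) (s ^ (1 + a₁)) * A t := by
  have ha_nonneg (v : ℝ) (hv : 0 ≤ v) : 0 ≤ a v :=
    hv.eq_or_lt.elim (fun h => h ▸ ha_zero.ge) fun h => (ha_pos v h).le
  have hmono : MonotoneOn (fun t => a t * t ^ (-a₀)) (Ioi 0) :=
    monotoneOn_mul_rpow_neg ha_diff fun t ht => (le_div_iff₀ (ha_pos t ht)).1 (hcond t ht).1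
  have hanti : AntitoneOn (fun t => a t * t ^ (-a₁)) (Ioi 0) :=
    antitoneOn_mul_rpow_neg ha_diff fun t ht => (div_le_iff₀ (ha_pos t ht)).1 (hcond t ht).2
  intro s hs t ht
  have hAt : 0 ≤ A t := hA t ▸ intervalIntegral.integral_nonneg ht fun v hv => ha_nonneg v hv.1
  have hbounds : min (s ^ (1 + a₀)) (s ^ (1 + a₁)) * A t ≤ A (s * t) ∧
      A (s * t) ≤ max (s ^ (1 + a₀)) (s ^ (1 + a₁)) * A t := by
    rcases hs.eq_or_lt with rfl | hs
    · rw [zero_mul, hA 0, intervalIntegral.integral_same, zero_rpow (x := 1 + a₁) (by linarith),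
        min_eq_right (rpow_nonneg le_rfl _), zero_mul]
      exact ⟨le_rfl, by positivity⟩
    have hpow (p : ℝ) : s * s ^ p = s ^ (1 + p) := by rw [rpow_add hs, rpow_one]
    rw [← hpow, ← hpow, ← mul_min_of_nonneg _ _ hs.le, ← mul_max_of_nonneg _ _ hs.le, hA, hA]
    exact ⟨mul_mul_integral_le_integral_mul ha_cont hs.le ht fun v hv =>
        min_rpow_mul_le_apply_mul hmono hanti hs hv.1 (ha_nonneg v hv.1.le),
      integral_mul_le_mul_mul_integral ha_cont hs.le ht fun v hv =>
        apply_mul_le_max_rpow_mul hmono hanti hs hv.1 (ha_nonneg v hv.1.le)⟩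
  have h1 : 1 ≤ 1 + a₁ := by linarith
  exact ⟨(div_le_self (by positivity) h1).trans hbounds.1,
    hbounds.2.trans (by
      rw [mul_assoc]
      exact le_mul_of_one_le_left (mul_nonneg (le_max_of_le_left (rpow_nonneg hs _)) hAt) h1)⟩

/-- Inequality (1.5): for all `s, t ≥ 0`,
`min(s^{1+a₀}, s^{1+a₁})·A(t)/(1+a₁) ≤ A(s·t) ≤ (1+a₁)·max(s^{1+a₀}, s^{1+a₁})·A(t)`. -/
theorem stmt_3
    (a : ℝ → ℝ) (a₀ a₁ : ℝ)
    (ha_cont : ContinuousOn a (Set.Ici 0))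
    (ha_diff : ∀ t ∈ Set.Ioi (0:ℝ), DifferentiableAt ℝ a t)
    (ha_deriv_cont : ContinuousOn (deriv a) (Set.Ioi 0))
    (ha_zero : a 0 = 0)
    (ha_pos : ∀ t > 0, 0 < a t)
    (ha₀_pos : 0 < a₀) (ha₀_lt : a₀ < 1) (ha₁_gt : 1 < a₁)
    (hcond : ∀ t > 0, a₀ ≤ t * deriv a t / a t ∧ t * deriv a t / a t ≤ a₁)
    (A : ℝ → ℝ) (hA : ∀ t, A t = ∫ s in (0:ℝ)..t, a s) :
    ∀ s ≥ (0:ℝ), ∀ t ≥ (0:ℝ),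
      min (s ^ (1 + a₀)) (s ^ (1 + a₁)) * A t / (1 + a₁) ≤ A (s * t) ∧
      A (s * t) ≤ (1 + a₁) * max (s ^ (1 + a₀)) (s ^ (1 + a₁)) * A t :=
  stmt_3_general a a₀ a₁ ha_cont ha_diff ha_zero ha_pos ha₁_gt hcond A hA
end

section
/- Let φ ∈ C¹((0,∞)) ∩ C⁰([0,∞)) with φ(0) = 0 and φ(t) > 0 for t > 0 satisfy c₀ ≤ t·φ'(t)/φ(t) ≤ c₁ for all t > 0, with constants 0 < c₀ ≤ c₁, and set Φ(t) = ∫₀ᵗ φ(s) ds. Define b(t) = φ(A(t))·a(t), which is the derivative of the composite function B = Φ ∘ A. Then there exist constants 0 < b₀ ≤ b₁ (for instance b₀ = c₀ + a₀ and b₁ = c₁(1 + a₁) + a₁) such that b₀ ≤ t·b'(t)/b(t) ≤ b₁ for all t > 0; that is, the composition B = Φ ∘ A again satisfies condition (1.1). -/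
/-!
Writing `b = (φ ∘ A) · a`, the logarithmic derivative splits as
`t b'/b = (A φ'(A)/φ(A)) · (t a/A) + t a'/a`. The first and last factors are controlled by
the hypotheses on `φ` and `a`; the middle one satisfies `1 + a₀ ≤ t a(t)/A(t) ≤ 1 + a₁`, because
`t a(t) - (1 + m) A(t)` vanishes at `0` and has derivative `t a'(t) - m a(t)`, whose sign is that
of `t a'(t)/a(t) - m`.
-/

open MeasureTheory Set intervalIntegral

theorem nonneg_of_hasDerivAt_nonneg {F F' : ℝ → ℝ} {t : ℝ} (ht : 0 ≤ t)
    (hF : ContinuousOn F (Icc 0 t)) (hF0 : F 0 = 0)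
    (hF' : ∀ x ∈ Ioo 0 t, HasDerivAt F (F' x) x) (hF'_nonneg : ∀ x ∈ Ioo 0 t, 0 ≤ F' x) :
    0 ≤ F t := by
  have hmono : MonotoneOn F (Icc 0 t) :=
    monotoneOn_of_hasDerivWithinAt_nonneg (convex_Icc 0 t) hF
      (by simpa only [interior_Icc] using fun x hx => (hF' x hx).hasDerivWithinAt)
      (by simpa only [interior_Icc] using hF'_nonneg)
  simpa only [hF0] using hmono (left_mem_Icc.2 ht) (right_mem_Icc.2 ht) ht

section Primitive

variable {f : ℝ → ℝ} {t : ℝ}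

theorem hasDerivAt_primitive_of_continuousOn_Ici (hf : ContinuousOn f (Ici 0)) (ht : 0 < t) :
    HasDerivAt (fun u => ∫ s in (0:ℝ)..u, f s) (f t) t :=
  integral_hasDerivAt_right
    (hf.mono Icc_subset_Ici_self |>.intervalIntegrable_of_Icc ht.le)
    ((hf.mono Ioi_subset_Ici_self).stronglyMeasurableAtFilter isOpen_Ioi t ht)
    (hf.continuousAt (Ici_mem_nhds ht))

theorem continuousOn_primitive_Icc_of_continuousOn_Ici (hf : ContinuousOn f (Ici 0))
    (ht : 0 ≤ t) : ContinuousOn (fun u => ∫ s in (0:ℝ)..u, f s) (Icc 0 t) := by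
  have hint : IntegrableOn f (uIcc 0 t) := by
    rw [uIcc_of_le ht]
    exact (hf.mono Icc_subset_Ici_self).integrableOn_Icc
  simpa only [uIcc_of_le ht] using continuousOn_primitive_interval hint

theorem primitive_pos_of_pos (hf : ContinuousOn f (Ici 0)) (hpos : ∀ s > 0, 0 < f s)
    (ht : 0 < t) : 0 < ∫ s in (0:ℝ)..t, f s :=
  intervalIntegral_pos_of_pos_on
    (hf.mono Icc_subset_Ici_self |>.intervalIntegrable_of_Icc ht.le) (fun s hs => hpos s hs.1) ht

end Primitive

section Elasticity

variable {a : ℝ → ℝ} {t : ℝ} (ha : ContinuousOn a (Ici 0))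
  (ha_diff : ∀ t > 0, DifferentiableAt ℝ a t) (ha_pos : ∀ t > 0, 0 < a t) (ha_zero : a 0 = 0)
include ha ha_diff ha_pos ha_zero

theorem one_add_mul_primitive_le_of_le_elasticity {m : ℝ}
    (hm : ∀ t > 0, m ≤ t * deriv a t / a t) (ht : 0 < t) :
    (1 + m) * ∫ s in (0:ℝ)..t, a s ≤ t * a t := by
  have hnonneg := nonneg_of_hasDerivAt_nonneg
    (F := fun s => s * a s - (1 + m) * ∫ u in (0:ℝ)..s, a u)
    (F' := fun x => 1 * a x + x * deriv a x - (1 + m) * a x) ht.le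
    ((continuousOn_id.mul (ha.mono Icc_subset_Ici_self)).sub
      (continuousOn_const.mul (continuousOn_primitive_Icc_of_continuousOn_Ici ha ht.le)))
    (by simp [ha_zero])
    (fun x hx => ((hasDerivAt_id x).mul (ha_diff x hx.1).hasDerivAt).sub
      ((hasDerivAt_primitive_of_continuousOn_Ici ha hx.1).const_mul _))
    (fun x hx => by
      have := (le_div_iff₀ (ha_pos x hx.1)).1 (hm x hx.1)
      linarith)
  linarith

theorem mul_le_one_add_mul_primitive_of_elasticity_le {M : ℝ}
    (hM : ∀ t > 0, t * deriv a t / a t ≤ M) (ht : 0 < t) :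
    t * a t ≤ (1 + M) * ∫ s in (0:ℝ)..t, a s := by
  have hnonneg := nonneg_of_hasDerivAt_nonneg
    (F := fun s => (1 + M) * (∫ u in (0:ℝ)..s, a u) - s * a s)
    (F' := fun x => (1 + M) * a x - (1 * a x + x * deriv a x)) ht.le
    ((continuousOn_const.mul (continuousOn_primitive_Icc_of_continuousOn_Ici ha ht.le)).sub
      (continuousOn_id.mul (ha.mono Icc_subset_Ici_self)))
    (by simp [ha_zero])
    (fun x hx => ((hasDerivAt_primitive_of_continuousOn_Ici ha hx.1).const_mul _).sub
      ((hasDerivAt_id x).mul (ha_diff x hx.1).hasDerivAt))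
    (fun x hx => by
      have := (div_le_iff₀ (ha_pos x hx.1)).1 (hM x hx.1)
      linarith)
  linarith

end Elasticity

theorem mul_deriv_comp_mul_div {φ A a : ℝ → ℝ} {t : ℝ} (hφ : DifferentiableAt ℝ φ (A t))
    (hA : HasDerivAt A (a t) t) (ha : DifferentiableAt ℝ a t)
    (hAt : A t ≠ 0) (hφt : φ (A t) ≠ 0) (hat : a t ≠ 0) :
    t * deriv (fun s => φ (A s) * a s) t / (φ (A t) * a t) =
      A t * deriv φ (A t) / φ (A t) * (t * a t / A t) + t * deriv a t / a t := by
  have hb : HasDerivAt (fun s => φ (A s) * a s) _ t :=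
    (hφ.hasDerivAt.comp t hA).mul ha.hasDerivAt
  rw [hb.deriv, Function.comp_apply]
  field_simp

theorem stmt_5_general
    (a : ℝ → ℝ) (a₀ a₁ : ℝ)
    (ha_cont : ContinuousOn a (Set.Ici 0))
    (ha_diff : ∀ t ∈ Set.Ioi (0:ℝ), DifferentiableAt ℝ a t)
    (ha_zero : a 0 = 0)
    (ha_pos : ∀ t > 0, 0 < a t)
    (ha₀_pos : 0 < a₀)
    (hconda : ∀ t > 0, a₀ ≤ t * deriv a t / a t ∧ t * deriv a t / a t ≤ a₁)
    (A : ℝ → ℝ) (hA : ∀ t, A t = ∫ s in (0:ℝ)..t, a s)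
    (φ : ℝ → ℝ) (c₀ c₁ : ℝ)
    (hφ_cont : ContinuousOn φ (Set.Ici 0))
    (hφ_diff : ∀ t ∈ Set.Ioi (0:ℝ), DifferentiableAt ℝ φ t)
    (hφ_pos : ∀ t > 0, 0 < φ t)
    (hc₀_pos : 0 < c₀)
    (hcondφ : ∀ t > 0, c₀ ≤ t * deriv φ t / φ t ∧ t * deriv φ t / φ t ≤ c₁)
    (Φ : ℝ → ℝ) (hΦ : ∀ t, Φ t = ∫ s in (0:ℝ)..t, φ s)
    (b : ℝ → ℝ) (hb : ∀ t, b t = φ (A t) * a t) :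
    (∀ t > 0, HasDerivAt (fun s => Φ (A s)) (b t) t) ∧
    ∃ b₀ b₁ : ℝ, 0 < b₀ ∧ b₀ ≤ b₁ ∧
      ∀ t > 0, b₀ ≤ t * deriv b t / b t ∧ t * deriv b t / b t ≤ b₁ := by
  have hA_deriv (t : ℝ) (ht : 0 < t) : HasDerivAt A (a t) t := by
    simpa only [← funext hA] using hasDerivAt_primitive_of_continuousOn_Ici ha_cont ht
  have hA_pos (t : ℝ) (ht : 0 < t) : 0 < A t := hA t ▸ primitive_pos_of_pos ha_cont ha_pos ht
  have hbounds (t : ℝ) (ht : 0 < t) :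
      c₀ * (1 + a₀) + a₀ ≤ t * deriv b t / b t ∧ t * deriv b t / b t ≤ c₁ * (1 + a₁) + a₁ := by
    have hAt := hA_pos t ht
    obtain ⟨hφ₀, hφ₁⟩ := hcondφ (A t) hAt
    obtain ⟨ha₀, ha₁⟩ := hconda t ht
    have hratio₀ : 1 + a₀ ≤ t * a t / A t := (le_div_iff₀ hAt).2 <| hA t ▸
      one_add_mul_primitive_le_of_le_elasticity ha_cont ha_diff ha_pos ha_zero
        (fun s hs => (hconda s hs).1) ht
    have hratio₁ : t * a t / A t ≤ 1 + a₁ := (div_le_iff₀ hAt).2 <| hA t ▸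
      mul_le_one_add_mul_primitive_of_elasticity_le ha_cont ha_diff ha_pos ha_zero
        (fun s hs => (hconda s hs).2) ht
    rw [show b = fun s => φ (A s) * a s from funext hb, mul_deriv_comp_mul_div
      (hφ_diff _ hAt) (hA_deriv t ht) (ha_diff t ht) hAt.ne' (hφ_pos _ hAt).ne' (ha_pos t ht).ne']
    constructor
    · have := mul_le_mul hφ₀ hratio₀ (by linarith) (by linarith)
      linarith
    · have := mul_le_mul hφ₁ hratio₁ (by linarith) (by linarith)
      linarith
  refine ⟨fun t ht => ?_, _, _, by positivity, (hbounds 1 one_pos).1.trans (hbounds 1 one_pos).2,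
    hbounds⟩
  have hΦ_deriv : HasDerivAt Φ (φ (A t)) (A t) := by
    simpa only [← funext hΦ] using hasDerivAt_primitive_of_continuousOn_Ici hφ_cont (hA_pos t ht)
  exact hb t ▸ hΦ_deriv.comp t (hA_deriv t ht)

/-- Remark 1.1 (i): if `φ` satisfies condition (1.1) (with constants `c₀ ≤ c₁`) and `a`
satisfies condition (1.1) (with constants `a₀ < 1 < a₁`), then the derivative
`b(t) = φ(A(t))·a(t)` of the composition `B = Φ ∘ A` again satisfies condition (1.1),
for suitable constants `0 < b₀ ≤ b₁`. -/
theorem stmt_5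
    (a : ℝ → ℝ) (a₀ a₁ : ℝ)
    (ha_cont : ContinuousOn a (Set.Ici 0))
    (ha_diff : ∀ t ∈ Set.Ioi (0:ℝ), DifferentiableAt ℝ a t)
    (ha_deriv_cont : ContinuousOn (deriv a) (Set.Ioi 0))
    (ha_zero : a 0 = 0)
    (ha_pos : ∀ t > 0, 0 < a t)
    (ha₀_pos : 0 < a₀) (ha₀_lt : a₀ < 1) (ha₁_gt : 1 < a₁)
    (hconda : ∀ t > 0, a₀ ≤ t * deriv a t / a t ∧ t * deriv a t / a t ≤ a₁)
    (A : ℝ → ℝ) (hA : ∀ t, A t = ∫ s in (0:ℝ)..t, a s)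
    (φ : ℝ → ℝ) (c₀ c₁ : ℝ)
    (hφ_cont : ContinuousOn φ (Set.Ici 0))
    (hφ_diff : ∀ t ∈ Set.Ioi (0:ℝ), DifferentiableAt ℝ φ t)
    (hφ_deriv_cont : ContinuousOn (deriv φ) (Set.Ioi 0))
    (hφ_zero : φ 0 = 0)
    (hφ_pos : ∀ t > 0, 0 < φ t)
    (hc₀_pos : 0 < c₀) (hc₀c₁ : c₀ ≤ c₁)
    (hcondφ : ∀ t > 0, c₀ ≤ t * deriv φ t / φ t ∧ t * deriv φ t / φ t ≤ c₁)
    (Φ : ℝ → ℝ) (hΦ : ∀ t, Φ t = ∫ s in (0:ℝ)..t, φ s)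
    (b : ℝ → ℝ) (hb : ∀ t, b t = φ (A t) * a t) :
    (∀ t > 0, HasDerivAt (fun s => Φ (A s)) (b t) t) ∧
    ∃ b₀ b₁ : ℝ, 0 < b₀ ∧ b₀ ≤ b₁ ∧
      ∀ t > 0, b₀ ≤ t * deriv b t / b t ∧ t * deriv b t / b t ≤ b₁ :=
  stmt_5_general a a₀ a₁ ha_cont ha_diff ha_zero ha_pos ha₀_pos hconda A hA φ c₀ c₁ hφ_cont hφ_diff
    hφ_pos hc₀_pos hcondφ Φ hΦ b hb
end

section
/- Let n ≥ 2 and p > 1, and for (ξ, ζ) ∈ ℝ^{2n} with (ξ, ζ) ≠ (0, 0) define F_p(ξ, ζ) = ∫₀¹ |tξ + (1−t)ζ|^{p−2} dt. Then there exist positive constants c(p, n) < C(p, n), depending only on p and n, such that for all (ξ, ζ) ∈ ℝ^{2n} \ {0}: c(p, n)·(|ξ|² + |ζ|²)^{(p−2)/2} ≤ F_p(ξ, ζ) ≤ C(p, n)·(|ξ|² + |ζ|²)^{(p−2)/2}. -/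
/-!
Write `a = ‖ξ‖`, `b = ‖ζ‖`, `R = √(a² + b²)`, `q = p - 2 > -1` and `t₀ = b / (a + b) ∈ [0, 1]`.
For `t ∈ [0, 1]` the norm of `tξ + (1 - t)ζ` is at most `ta + (1 - t)b ≤ R`, and by the reverse
triangle inequality at least `|ta - (1 - t)b| = (a + b)|t - t₀| ≥ R|t - t₀|`. So the integrand
`|tξ + (1 - t)ζ|^q` lies between `R^q` and `R^q |t - t₀|^q`, in an order fixed by the sign of `q`,
and `∫₀¹ |t - t₀|^q dt = (t₀^(q+1) + (1 - t₀)^(q+1)) / (q + 1)` lies between `2^(-q-1) / (q + 1)`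
and `2 / (q + 1)`.
-/

open Real MeasureTheory intervalIntegral Set

lemma div_add_mem_Icc {a b : ℝ} (ha : 0 ≤ a) (hb : 0 ≤ b) : b / (a + b) ∈ Icc (0:ℝ) 1 :=
  ⟨by positivity, div_le_one_of_le₀ (by linarith) (by positivity)⟩

section AbsRpow

variable {q : ℝ}

lemma intervalIntegrable_abs_rpow (hq : -1 < q) (a b : ℝ) :
    IntervalIntegrable (fun x => |x| ^ q) volume a b := by
  have h_nonneg : ∀ c, 0 ≤ c → IntervalIntegrable (fun x => |x| ^ q) volume 0 c := fun c hc =>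
    (intervalIntegrable_rpow' hq).congr fun x hx => by
      rw [uIoc_of_le hc] at hx
      simp only [abs_of_pos hx.1]
  have h : ∀ c, IntervalIntegrable (fun x => |x| ^ q) volume 0 c := by
    intro c
    rcases le_total 0 c with hc | hc
    · exact h_nonneg c hc
    · simpa using (h_nonneg (-c) (by linarith)).comp_sub_left 0
  exact (h a).symm.trans (h b)

lemma integral_abs_rpow {c : ℝ} (hq : -1 < q) (hc : 0 ≤ c) :
    ∫ x in (0:ℝ)..c, |x| ^ q = c ^ (q + 1) / (q + 1) := by
  have h_eq : EqOn (fun x => |x| ^ q) (fun x => x ^ q) (uIcc 0 c) := fun x hx => by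
    rw [uIcc_of_le hc] at hx
    simp only [abs_of_nonneg hx.1]
  rw [integral_congr h_eq, integral_rpow (Or.inl hq), zero_rpow (by linarith), sub_zero]

lemma intervalIntegrable_abs_sub_rpow (hq : -1 < q) (s a b : ℝ) :
    IntervalIntegrable (fun t => |t - s| ^ q) volume a b := by
  simpa using (intervalIntegrable_abs_rpow hq (a - s) (b - s)).comp_sub_right s

lemma integral_abs_sub_rpow {s : ℝ} (hq : -1 < q) (hs : s ∈ Icc (0:ℝ) 1) :
    ∫ t in (0:ℝ)..1, |t - s| ^ q = (s ^ (q + 1) + (1 - s) ^ (q + 1)) / (q + 1) := by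
  have h_left : ∫ x in -s..0, |x| ^ q = s ^ (q + 1) / (q + 1) := by
    simpa using (integral_comp_neg (a := 0) (b := s) fun x => |x| ^ q).symm.trans
      (by simpa only [abs_neg] using integral_abs_rpow hq hs.1)
  rw [integral_comp_sub_right (fun x => |x| ^ q), zero_sub,
    ← integral_add_adjacent_intervals (b := 0) (intervalIntegrable_abs_rpow hq _ _)
      (intervalIntegrable_abs_rpow hq _ _), h_left, integral_abs_rpow hq (by linarith [hs.2]),
    add_div]

lemma half_rpow_div_le_integral_abs_sub_rpow {s : ℝ} (hq : -1 < q) (hs : s ∈ Icc (0:ℝ) 1) :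
    (1 / 2) ^ (q + 1) / (q + 1) ≤ ∫ t in (0:ℝ)..1, |t - s| ^ q := by
  have hq₀ : 0 < q + 1 := by linarith
  rw [integral_abs_sub_rpow hq hs]
  gcongr
  rcases le_total (1 / 2) s with h | h
  · linarith [rpow_le_rpow (by norm_num) h hq₀.le,
      rpow_nonneg (by linarith [hs.2] : 0 ≤ 1 - s) (q + 1)]
  · linarith [rpow_le_rpow (by norm_num) (by linarith : 1 / 2 ≤ 1 - s) hq₀.le,
      rpow_nonneg hs.1 (q + 1)]

lemma integral_abs_sub_rpow_le {s : ℝ} (hq : -1 < q) (hs : s ∈ Icc (0:ℝ) 1) :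
    ∫ t in (0:ℝ)..1, |t - s| ^ q ≤ 2 / (q + 1) := by
  have hq₀ : 0 < q + 1 := by linarith
  rw [integral_abs_sub_rpow hq hs]
  gcongr
  linarith [rpow_le_one hs.1 hs.2 hq₀.le,
    rpow_le_one (by linarith [hs.2] : 0 ≤ 1 - s) (by linarith [hs.1]) hq₀.le]

end AbsRpow

section Segment

variable {E : Type*} [NormedAddCommGroup E] [NormedSpace ℝ E] (ξ ζ : E)

lemma norm_smul_add_one_sub_smul_le_sqrt {t : ℝ} (ht : t ∈ Icc (0:ℝ) 1) :
    ‖t • ξ + (1 - t) • ζ‖ ≤ √(‖ξ‖ ^ 2 + ‖ζ‖ ^ 2) := by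
  have hξ : ‖ξ‖ ≤ √(‖ξ‖ ^ 2 + ‖ζ‖ ^ 2) := le_sqrt_of_sq_le (by nlinarith [sq_nonneg ‖ζ‖])
  have hζ : ‖ζ‖ ≤ √(‖ξ‖ ^ 2 + ‖ζ‖ ^ 2) := le_sqrt_of_sq_le (by nlinarith [sq_nonneg ‖ξ‖])
  calc ‖t • ξ + (1 - t) • ζ‖ ≤ t * ‖ξ‖ + (1 - t) * ‖ζ‖ := by
        refine (norm_add_le _ _).trans_eq ?_
        rw [norm_smul, norm_smul, norm_of_nonneg ht.1, norm_of_nonneg (by linarith [ht.2])]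
    _ ≤ t * √(‖ξ‖ ^ 2 + ‖ζ‖ ^ 2) + (1 - t) * √(‖ξ‖ ^ 2 + ‖ζ‖ ^ 2) := by
        gcongr <;> linarith [ht.1, ht.2]
    _ = √(‖ξ‖ ^ 2 + ‖ζ‖ ^ 2) := by ring

-- When `ξ = ζ = 0` the quotient is the junk value `0 / 0 = 0`, but then both sides vanish.
lemma sqrt_mul_abs_sub_le_norm_smul_add_one_sub_smul {t : ℝ} (ht : t ∈ Icc (0:ℝ) 1) :
    √(‖ξ‖ ^ 2 + ‖ζ‖ ^ 2) * |t - ‖ζ‖ / (‖ξ‖ + ‖ζ‖)| ≤ ‖t • ξ + (1 - t) • ζ‖ := by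
  have hsum : 0 ≤ ‖ξ‖ + ‖ζ‖ := by positivity
  have h_sqrt : √(‖ξ‖ ^ 2 + ‖ζ‖ ^ 2) ≤ ‖ξ‖ + ‖ζ‖ :=
    sqrt_le_iff.2 ⟨hsum, by nlinarith [norm_nonneg ξ, norm_nonneg ζ]⟩
  have h_rescale : (‖ξ‖ + ‖ζ‖) * |t - ‖ζ‖ / (‖ξ‖ + ‖ζ‖)| = |t * ‖ξ‖ - (1 - t) * ‖ζ‖| := by
    rcases hsum.eq_or_lt with h0 | hpos
    · have hζ : ‖ζ‖ = 0 := by linarith [norm_nonneg ξ, norm_nonneg ζ]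
      have hξ : ‖ξ‖ = 0 := by linarith
      simp [hξ, hζ]
    · rw [← abs_of_pos hpos, ← abs_mul, abs_of_pos hpos, mul_sub, mul_div_cancel₀ _ hpos.ne']
      ring_nf
  have h_reverse : |t * ‖ξ‖ - (1 - t) * ‖ζ‖| ≤ ‖t • ξ + (1 - t) • ζ‖ := by
    simpa [norm_smul, abs_of_nonneg ht.1, abs_of_nonneg (by linarith [ht.2] : 0 ≤ 1 - t)]
      using abs_norm_sub_norm_le (t • ξ) (-((1 - t) • ζ))
  calc _ ≤ (‖ξ‖ + ‖ζ‖) * |t - ‖ζ‖ / (‖ξ‖ + ‖ζ‖)| := by gcongr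
    _ ≤ _ := h_rescale ▸ h_reverse

end Segment

section Bounds

variable {E : Type*} [NormedAddCommGroup E] [NormedSpace ℝ E] {q : ℝ}

lemma integral_norm_smul_add_one_sub_smul_rpow_bounds_of_nonneg (hq : 0 ≤ q) (ξ ζ : E) :
    (1 / 2) ^ (q + 1) / (q + 1) * (‖ξ‖ ^ 2 + ‖ζ‖ ^ 2) ^ (q / 2) ≤
        ∫ t in (0:ℝ)..1, ‖t • ξ + (1 - t) • ζ‖ ^ q ∧
      ∫ t in (0:ℝ)..1, ‖t • ξ + (1 - t) • ζ‖ ^ q ≤ (‖ξ‖ ^ 2 + ‖ζ‖ ^ 2) ^ (q / 2) := by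
  set R := √(‖ξ‖ ^ 2 + ‖ζ‖ ^ 2)
  set t₀ := ‖ζ‖ / (‖ξ‖ + ‖ζ‖)
  have ht₀ : t₀ ∈ Icc (0:ℝ) 1 := div_add_mem_Icc (norm_nonneg ξ) (norm_nonneg ζ)
  have h_int : IntervalIntegrable (fun t : ℝ => ‖t • ξ + (1 - t) • ζ‖ ^ q) volume 0 1 :=
    (Continuous.rpow_const (by fun_prop) fun _ => Or.inr hq).intervalIntegrable 0 1
  rw [rpow_div_two_eq_sqrt q (by positivity)]
  constructor
  · calc (1 / 2) ^ (q + 1) / (q + 1) * R ^ q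
        ≤ R ^ q * ∫ t in (0:ℝ)..1, |t - t₀| ^ q := by
          rw [mul_comm]
          gcongr
          exact half_rpow_div_le_integral_abs_sub_rpow (by linarith) ht₀
      _ = ∫ t in (0:ℝ)..1, R ^ q * |t - t₀| ^ q := (intervalIntegral.integral_const_mul _ _).symm
      _ ≤ ∫ t in (0:ℝ)..1, ‖t • ξ + (1 - t) • ζ‖ ^ q := by
          refine integral_mono_on zero_le_one
            ((intervalIntegrable_abs_sub_rpow (by linarith) t₀ 0 1).const_mul _) h_int
            fun t ht => ?_
          rw [← mul_rpow (sqrt_nonneg _) (abs_nonneg _)]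
          exact rpow_le_rpow (by positivity)
            (sqrt_mul_abs_sub_le_norm_smul_add_one_sub_smul ξ ζ ht) hq
  · calc ∫ t in (0:ℝ)..1, ‖t • ξ + (1 - t) • ζ‖ ^ q ≤ ∫ _ in (0:ℝ)..1, R ^ q :=
          integral_mono_on zero_le_one h_int intervalIntegrable_const fun t ht =>
            rpow_le_rpow (norm_nonneg _) (norm_smul_add_one_sub_smul_le_sqrt ξ ζ ht) hq
      _ = R ^ q := by simp

lemma integral_norm_smul_add_one_sub_smul_rpow_bounds_of_nonpos (hq₁ : -1 < q) (hq : q ≤ 0)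
    {ξ ζ : E} (hξζ : (ξ, ζ) ≠ 0) :
    (‖ξ‖ ^ 2 + ‖ζ‖ ^ 2) ^ (q / 2) ≤ ∫ t in (0:ℝ)..1, ‖t • ξ + (1 - t) • ζ‖ ^ q ∧
      ∫ t in (0:ℝ)..1, ‖t • ξ + (1 - t) • ζ‖ ^ q ≤ 2 / (q + 1) * (‖ξ‖ ^ 2 + ‖ζ‖ ^ 2) ^ (q / 2) := by
  set R := √(‖ξ‖ ^ 2 + ‖ζ‖ ^ 2)
  set t₀ := ‖ζ‖ / (‖ξ‖ + ‖ζ‖)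
  have ht₀ : t₀ ∈ Icc (0:ℝ) 1 := div_add_mem_Icc (norm_nonneg ξ) (norm_nonneg ζ)
  have hR : 0 < R := by
    obtain h | h := not_and_or.1 (mt Prod.mk_eq_zero.2 hξζ) <;>
    · have := norm_pos_iff.2 h
      positivity
  have h_ae : ∀ᵐ t ∂volume.restrict (Icc (0:ℝ) 1), t ∈ Icc (0:ℝ) 1 ∧ 0 < R * |t - t₀| := by
    filter_upwards [self_mem_ae_restrict measurableSet_Icc, ae_restrict_of_ae (volume.ae_ne t₀)]
      with t ht hne
    exact ⟨ht, mul_pos hR (abs_pos.2 (sub_ne_zero.2 hne))⟩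
  have h_le_norm : ∀ᵐ t ∂volume.restrict (Icc (0:ℝ) 1),
      ‖t • ξ + (1 - t) • ζ‖ ^ q ≤ R ^ q * |t - t₀| ^ q := by
    filter_upwards [h_ae] with t ⟨ht, hpos⟩
    rw [← mul_rpow hR.le (abs_nonneg _)]
    exact rpow_le_rpow_of_nonpos hpos (sqrt_mul_abs_sub_le_norm_smul_add_one_sub_smul ξ ζ ht) hq
  have h_major : IntervalIntegrable (fun t => R ^ q * |t - t₀| ^ q) volume 0 1 :=
    (intervalIntegrable_abs_sub_rpow hq₁ t₀ 0 1).const_mul _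
  have h_int : IntervalIntegrable (fun t : ℝ => ‖t • ξ + (1 - t) • ζ‖ ^ q) volume 0 1 := by
    refine h_major.mono_fun'
      ((Continuous.measurable (by fun_prop)).pow_const q).aestronglyMeasurable ?_
    rw [uIoc_of_le zero_le_one]
    filter_upwards [ae_restrict_of_ae_restrict_of_subset Ioc_subset_Icc_self h_le_norm] with t ht
    rwa [norm_of_nonneg (rpow_nonneg (norm_nonneg _) q)]
  rw [rpow_div_two_eq_sqrt q (by positivity)]
  constructor
  · calc R ^ q = ∫ _ in (0:ℝ)..1, R ^ q := by simp
      _ ≤ ∫ t in (0:ℝ)..1, ‖t • ξ + (1 - t) • ζ‖ ^ q := by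
          refine integral_mono_ae_restrict zero_le_one intervalIntegrable_const h_int ?_
          filter_upwards [h_ae] with t ⟨ht, hpos⟩
          exact rpow_le_rpow_of_nonpos (lt_of_lt_of_le hpos
            (sqrt_mul_abs_sub_le_norm_smul_add_one_sub_smul ξ ζ ht))
            (norm_smul_add_one_sub_smul_le_sqrt ξ ζ ht) hq
  · calc ∫ t in (0:ℝ)..1, ‖t • ξ + (1 - t) • ζ‖ ^ q
        ≤ ∫ t in (0:ℝ)..1, R ^ q * |t - t₀| ^ q :=
          integral_mono_ae_restrict zero_le_one h_int h_major h_le_norm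
      _ = R ^ q * ∫ t in (0:ℝ)..1, |t - t₀| ^ q := intervalIntegral.integral_const_mul _ _
      _ ≤ 2 / (q + 1) * R ^ q := by
          rw [mul_comm]
          gcongr
          exact integral_abs_sub_rpow_le hq₁ ht₀

end Bounds

theorem stmt_7_general (n : ℕ) (p : ℝ) (hp : 1 < p) :
    ∃ c C : ℝ, 0 < c ∧ c < C ∧
      ∀ ξ ζ : EuclideanSpace ℝ (Fin n), (ξ, ζ) ≠ 0 →
        c * (‖ξ‖ ^ 2 + ‖ζ‖ ^ 2) ^ ((p - 2) / 2) ≤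
            (∫ t in (0:ℝ)..1, ‖t • ξ + (1 - t) • ζ‖ ^ (p - 2)) ∧
        (∫ t in (0:ℝ)..1, ‖t • ξ + (1 - t) • ζ‖ ^ (p - 2)) ≤
            C * (‖ξ‖ ^ 2 + ‖ζ‖ ^ 2) ^ ((p - 2) / 2) := by
  rcases le_or_gt 2 p with hp₂ | hp₂
  · refine ⟨(1 / 2) ^ (p - 2 + 1) / (p - 2 + 1), 1, by positivity, ?_, fun ξ ζ _ => ?_⟩
    · have : (1 / 2 : ℝ) ^ (p - 2 + 1) < 1 := rpow_lt_one (by norm_num) (by norm_num) (by linarith)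
      rw [div_lt_one (by linarith)]
      linarith
    · rw [one_mul]
      exact integral_norm_smul_add_one_sub_smul_rpow_bounds_of_nonneg (by linarith) ξ ζ
  · refine ⟨1, 2 / (p - 2 + 1), one_pos, ?_, fun ξ ζ hξζ => ?_⟩
    · rw [lt_div_iff₀ (by linarith)]
      linarith
    · rw [one_mul]
      exact integral_norm_smul_add_one_sub_smul_rpow_bounds_of_nonpos (by linarith) (by linarith)
        hξζ

/-- Lemma 2.6: for `n ≥ 2` and `p > 1` there are constants `0 < c(p,n) < C(p,n)` such that
for all `(ξ, ζ) ≠ (0,0)` in `ℝ^{2n}`,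
`c·(|ξ|²+|ζ|²)^{(p-2)/2} ≤ ∫₀¹ |tξ+(1-t)ζ|^{p-2} dt ≤ C·(|ξ|²+|ζ|²)^{(p-2)/2}`. -/
theorem stmt_7 (n : ℕ) (hn : 2 ≤ n) (p : ℝ) (hp : 1 < p) :
    ∃ c C : ℝ, 0 < c ∧ c < C ∧
      ∀ ξ ζ : EuclideanSpace ℝ (Fin n), (ξ, ζ) ≠ 0 →
        c * (‖ξ‖ ^ 2 + ‖ζ‖ ^ 2) ^ ((p - 2) / 2) ≤
            (∫ t in (0:ℝ)..1, ‖t • ξ + (1 - t) • ζ‖ ^ (p - 2)) ∧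
        (∫ t in (0:ℝ)..1, ‖t • ξ + (1 - t) • ζ‖ ^ (p - 2)) ≤
            C * (‖ξ‖ ^ 2 + ‖ζ‖ ^ 2) ^ ((p - 2) / 2) :=
  stmt_7_general n p hp
end

section
/- Let n ≥ 2 and for (ξ, ζ) ∈ ℝ^{2n} with (ξ, ζ) ≠ (0, 0) define G(ξ, ζ) = ∫₀¹ a(|θ_t|)/|θ_t| dt, where θ_t = tξ + (1−t)ζ. Then there exist two positive constants c (depending only on n and a₁) and C (depending only on n and a₀) such that for all (ξ, ζ) ∈ ℝ^{2n} \ {0}: c·a(|ξ| + |ζ|)/(|ξ| + |ζ|) ≤ G(ξ, ζ) ≤ C·a(|ξ| + |ζ|)/(|ξ| + |ζ|). -/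
/-!
Condition (1.1) makes `u ↦ a u / u ^ a₀` nondecreasing and `u ↦ a u / u ^ a₁` nonincreasing on
`(0, ∞)`. Along the segment, `|t‖ξ‖ - (1 - t)‖ζ‖| ≤ ‖θ_t‖ ≤ s := ‖ξ‖ + ‖ζ‖`, so writing
`a r / r = (a r / r ^ q) * r ^ (q - 1)` bounds the integrand above by
`a s / s ^ a₀ * |t‖ξ‖ - (1 - t)‖ζ‖| ^ (a₀ - 1)` and below by the same expression with `a₁`.
Both bounds integrate explicitly to `a s / s ^ q * (‖ξ‖ ^ q + ‖ζ‖ ^ q) / (q * s)`, and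
`‖ξ‖ ^ q + ‖ζ‖ ^ q` is comparable to `s ^ q`.
-/

open Real MeasureTheory Set

section PowerLaw

variable {a : ℝ → ℝ} {q : ℝ}

lemma hasDerivAt_div_rpow {t : ℝ} (ha : DifferentiableAt ℝ a t) (ht : 0 < t) :
    HasDerivAt (fun u => a u / u ^ q) ((t * deriv a t - q * a t) / t ^ (q + 1)) t := by
  refine (ha.hasDerivAt.div (hasDerivAt_rpow_const (p := q) (Or.inl ht.ne'))
    (rpow_pos_of_pos ht q).ne').congr_deriv ?_
  rw [rpow_add_one ht.ne', rpow_sub_one ht.ne']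
  have := (rpow_pos_of_pos ht q).ne'
  field_simp

lemma monotoneOn_div_rpow (ha : ∀ t > 0, DifferentiableAt ℝ a t)
    (h : ∀ t > 0, q * a t ≤ t * deriv a t) :
    MonotoneOn (fun u => a u / u ^ q) (Ioi 0) := by
  refine monotoneOn_of_hasDerivWithinAt_nonneg
    (f' := fun t => (t * deriv a t - q * a t) / t ^ (q + 1)) (convex_Ioi 0)
    (fun t ht => (hasDerivAt_div_rpow (ha t ht) ht).continuousAt.continuousWithinAt)
    (fun t ht => ?_) (fun t ht => ?_) <;> rw [interior_Ioi] at ht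
  · exact (hasDerivAt_div_rpow (ha t ht) ht).hasDerivWithinAt
  · exact div_nonneg (sub_nonneg.2 (h t ht)) (rpow_nonneg (le_of_lt ht) _)

lemma antitoneOn_div_rpow (ha : ∀ t > 0, DifferentiableAt ℝ a t)
    (h : ∀ t > 0, t * deriv a t ≤ q * a t) :
    AntitoneOn (fun u => a u / u ^ q) (Ioi 0) := by
  refine antitoneOn_of_hasDerivWithinAt_nonpos
    (f' := fun t => (t * deriv a t - q * a t) / t ^ (q + 1)) (convex_Ioi 0)
    (fun t ht => (hasDerivAt_div_rpow (ha t ht) ht).continuousAt.continuousWithinAt)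
    (fun t ht => ?_) (fun t ht => ?_) <;> rw [interior_Ioi] at ht
  · exact (hasDerivAt_div_rpow (ha t ht) ht).hasDerivWithinAt
  · exact div_nonpos_of_nonpos_of_nonneg (sub_nonpos.2 (h t ht)) (rpow_nonneg (le_of_lt ht) _)

lemma div_eq_div_rpow_mul_rpow_sub_one (c : ℝ) {u : ℝ} (hu : 0 < u) :
    c / u = c / u ^ q * u ^ (q - 1) := by
  rw [rpow_sub_one hu.ne']
  have := (rpow_pos_of_pos hu q).ne'
  field_simp

variable {u v s : ℝ}

lemma div_le_of_monotoneOn_div_rpow (hmono : MonotoneOn (fun u => a u / u ^ q) (Ioi 0))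
    (hq : q ≤ 1) (has : 0 ≤ a s) (hv : 0 < v) (hvu : v ≤ u) (hus : u ≤ s) :
    a u / u ≤ a s / s ^ q * v ^ (q - 1) := by
  have hu : 0 < u := hv.trans_le hvu
  rw [div_eq_div_rpow_mul_rpow_sub_one (q := q) _ hu]
  calc a u / u ^ q * u ^ (q - 1) ≤ a s / s ^ q * u ^ (q - 1) :=
        mul_le_mul_of_nonneg_right (hmono hu (hu.trans_le hus) hus) (rpow_nonneg hu.le _)
    _ ≤ a s / s ^ q * v ^ (q - 1) :=
        mul_le_mul_of_nonneg_left (rpow_le_rpow_of_nonpos hv hvu (by linarith))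
          (div_nonneg has (rpow_nonneg (hu.le.trans hus) _))

lemma le_div_of_antitoneOn_div_rpow (hanti : AntitoneOn (fun u => a u / u ^ q) (Ioi 0))
    (hq : 1 < q) (ha_zero : a 0 = 0) (has : 0 ≤ a s) (hv : 0 ≤ v) (hvu : v ≤ u) (hus : u ≤ s) :
    a s / s ^ q * v ^ (q - 1) ≤ a u / u := by
  rcases (hv.trans hvu).eq_or_lt with rfl | hu
  · obtain rfl : v = 0 := le_antisymm hvu hv
    rw [zero_rpow (by linarith), ha_zero]
    simp
  rw [div_eq_div_rpow_mul_rpow_sub_one (q := q) _ hu]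
  calc a s / s ^ q * v ^ (q - 1) ≤ a s / s ^ q * u ^ (q - 1) :=
        mul_le_mul_of_nonneg_left (rpow_le_rpow hv hvu (by linarith))
          (div_nonneg has (rpow_nonneg (hu.le.trans hus) _))
    _ ≤ a u / u ^ q * u ^ (q - 1) :=
        mul_le_mul_of_nonneg_right (hanti hu (hu.trans_le hus) hus) (rpow_nonneg hu.le _)

end PowerLaw

section AbsRpow

variable {p : ℝ}

lemma intervalIntegrable_abs_rpow_s8 {r : ℝ} (hr : -1 < r) (b c : ℝ) :
    IntervalIntegrable (fun u => |u| ^ r) volume b c := by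
  have nonneg : ∀ c, 0 ≤ c → IntervalIntegrable (fun u => |u| ^ r) volume 0 c := by
    intro c hc
    rw [intervalIntegrable_iff_integrableOn_Ioc_of_le hc]
    refine ((intervalIntegrable_iff_integrableOn_Ioc_of_le hc).1
      (intervalIntegral.intervalIntegrable_rpow' hr)).congr_fun (fun u hu => ?_) measurableSet_Ioc
    rw [abs_of_pos hu.1]
  have from_zero : ∀ c, IntervalIntegrable (fun u => |u| ^ r) volume 0 c := by
    intro c
    rcases le_total 0 c with hc | hc
    · exact nonneg c hc
    · rw [IntervalIntegrable.iff_comp_neg]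
      simpa using nonneg (-c) (by linarith)
  exact (from_zero b).symm.trans (from_zero c)

lemma integral_zero_abs_rpow (hp : 0 < p) {b : ℝ} (hb : 0 ≤ b) :
    ∫ u in (0:ℝ)..b, |u| ^ (p - 1) = b ^ p / p := by
  rw [intervalIntegral.integral_congr (g := fun u : ℝ => u ^ (p - 1)) fun u hu => by
    rw [uIcc_of_le hb] at hu; simp only [abs_of_nonneg hu.1]]
  rw [integral_rpow (Or.inl (by linarith)), sub_add_cancel, zero_rpow hp.ne', sub_zero]

lemma integral_neg_abs_rpow (hp : 0 < p) {x y : ℝ} (hx : 0 ≤ x) (hy : 0 ≤ y) :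
    ∫ u in -y..x, |u| ^ (p - 1) = (x ^ p + y ^ p) / p := by
  have hI := intervalIntegrable_abs_rpow_s8 (r := p - 1) (by linarith)
  have h_neg : ∫ u in -y..0, |u| ^ (p - 1) = y ^ p / p := by
    have h := intervalIntegral.integral_comp_neg (a := 0) (b := y) (fun u : ℝ => |u| ^ (p - 1))
    simp only [abs_neg, neg_zero] at h
    rw [← h, integral_zero_abs_rpow hp hy]
  rw [← intervalIntegral.integral_add_adjacent_intervals (hI _ _) (hI _ _), h_neg,
    integral_zero_abs_rpow hp hx]
  ring

variable {x y : ℝ}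

lemma abs_mul_sub_mul_eq (t : ℝ) : |t * x - (1 - t) * y| = |(x + y) * t - y| := by
  ring_nf

lemma intervalIntegrable_abs_sub_rpow_s8 (hp : 0 < p) (hs : 0 < x + y) :
    IntervalIntegrable (fun t => |t * x - (1 - t) * y| ^ (p - 1)) volume 0 1 := by
  have h := ((intervalIntegrable_abs_rpow_s8 (r := p - 1) (by linarith) (-y) x).comp_sub_right y
    ).comp_mul_left (c := x + y)
  rw [neg_add_cancel, zero_div, div_self hs.ne'] at h
  simpa only [abs_mul_sub_mul_eq] using h

lemma integral_abs_sub_rpow_s8 (hp : 0 < p) (hx : 0 ≤ x) (hy : 0 ≤ y) (hs : 0 < x + y) :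
    ∫ t in (0:ℝ)..1, |t * x - (1 - t) * y| ^ (p - 1) = (x ^ p + y ^ p) / (p * (x + y)) := by
  have h := intervalIntegral.integral_comp_mul_sub (a := 0) (b := 1)
    (fun u : ℝ => |u| ^ (p - 1)) hs.ne' y
  simp only [mul_zero, zero_sub, mul_one, add_sub_cancel_right] at h
  simp only [abs_mul_sub_mul_eq]
  rw [h, integral_neg_abs_rpow hp hx hy, smul_eq_mul]
  field_simp

end AbsRpow

section Segment

variable {E : Type*} [NormedAddCommGroup E] [NormedSpace ℝ E] {t : ℝ}

lemma norm_segment_le (ξ ζ : E) (ht : t ∈ Icc (0:ℝ) 1) :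
    ‖t • ξ + (1 - t) • ζ‖ ≤ ‖ξ‖ + ‖ζ‖ := by
  have h1 : ‖t • ξ‖ = t * ‖ξ‖ := by rw [norm_smul, norm_of_nonneg ht.1]
  have h2 : ‖(1 - t) • ζ‖ = (1 - t) * ‖ζ‖ := by rw [norm_smul, norm_of_nonneg (by linarith [ht.2])]
  calc ‖t • ξ + (1 - t) • ζ‖ ≤ t * ‖ξ‖ + (1 - t) * ‖ζ‖ := h1 ▸ h2 ▸ norm_add_le _ _
    _ ≤ ‖ξ‖ + ‖ζ‖ := by nlinarith [ht.1, ht.2, norm_nonneg ξ, norm_nonneg ζ]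

lemma abs_sub_le_norm_segment (ξ ζ : E) (ht : t ∈ Icc (0:ℝ) 1) :
    |t * ‖ξ‖ - (1 - t) * ‖ζ‖| ≤ ‖t • ξ + (1 - t) • ζ‖ := by
  have h := abs_norm_sub_norm_le (t • ξ) (-((1 - t) • ζ))
  rwa [norm_neg, sub_neg_eq_add, norm_smul, norm_smul, norm_of_nonneg ht.1,
    norm_of_nonneg (by linarith [ht.2])] at h

end Segment

lemma rpow_add_le_two_rpow_mul_add_rpow {x y p : ℝ} (hx : 0 ≤ x) (hy : 0 ≤ y) (hp : 1 ≤ p) :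
    (x + y) ^ p ≤ 2 ^ (p - 1) * (x ^ p + y ^ p) := by
  lift x to NNReal using hx
  lift y to NNReal using hy
  exact_mod_cast NNReal.rpow_add_le_mul_rpow_add_rpow x y hp

section SegmentIntegral

variable {E : Type*} [NormedAddCommGroup E] [NormedSpace ℝ E] {a : ℝ → ℝ} {q : ℝ} {ξ ζ : E}

/-- Only almost everywhere: at `t = ‖ζ‖ / s` the weight is `0 ^ (q - 1)`, which is `0` in Lean
when `q < 1`. -/
lemma ae_div_norm_segment_le (hmono : MonotoneOn (fun u => a u / u ^ q) (Ioi 0)) (hq : q ≤ 1)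
    (ha_nonneg : ∀ u ≥ 0, 0 ≤ a u) (hs : 0 < ‖ξ‖ + ‖ζ‖) :
    ∀ᵐ t, t ∈ Icc (0:ℝ) 1 →
      a ‖t • ξ + (1 - t) • ζ‖ / ‖t • ξ + (1 - t) • ζ‖ ≤
        a (‖ξ‖ + ‖ζ‖) / (‖ξ‖ + ‖ζ‖) ^ q * |t * ‖ξ‖ - (1 - t) * ‖ζ‖| ^ (q - 1) := by
  filter_upwards [(countable_singleton (‖ζ‖ / (‖ξ‖ + ‖ζ‖))).ae_notMem volume] with t hne ht
  have hv : 0 < |t * ‖ξ‖ - (1 - t) * ‖ζ‖| := by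
    refine abs_pos.2 fun h => hne ?_
    rw [mem_singleton_iff, eq_div_iff hs.ne']
    linarith
  exact div_le_of_monotoneOn_div_rpow hmono hq (ha_nonneg _ hs.le) hv
    (abs_sub_le_norm_segment ξ ζ ht) (norm_segment_le ξ ζ ht)

lemma intervalIntegrable_div_norm_segment (ha_cont : ContinuousOn a (Ici 0))
    (hmono : MonotoneOn (fun u => a u / u ^ q) (Ioi 0)) (hq0 : 0 < q) (hq1 : q ≤ 1)
    (ha_nonneg : ∀ u ≥ 0, 0 ≤ a u) (hs : 0 < ‖ξ‖ + ‖ζ‖) :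
    IntervalIntegrable (fun t => a ‖t • ξ + (1 - t) • ζ‖ / ‖t • ξ + (1 - t) • ζ‖) volume 0 1 := by
  have hr : Continuous fun t : ℝ => ‖t • ξ + (1 - t) • ζ‖ := by fun_prop
  refine ((intervalIntegrable_abs_sub_rpow_s8 hq0 hs).const_mul
    (a (‖ξ‖ + ‖ζ‖) / (‖ξ‖ + ‖ζ‖) ^ q)).mono_fun' ?_ ?_
  · exact ((ha_cont.comp_continuous hr fun t => norm_nonneg _).measurable.div
      hr.measurable).aestronglyMeasurable
  · rw [uIoc_of_le zero_le_one]
    filter_upwards [ae_restrict_mem measurableSet_Ioc,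
      ae_restrict_of_ae (ae_div_norm_segment_le hmono hq1 ha_nonneg hs)] with t ht hle
    rw [norm_of_nonneg (div_nonneg (ha_nonneg _ (norm_nonneg _)) (norm_nonneg _))]
    exact hle (Ioc_subset_Icc_self ht)

lemma integral_div_norm_segment_le (ha_cont : ContinuousOn a (Ici 0))
    (hmono : MonotoneOn (fun u => a u / u ^ q) (Ioi 0)) (hq0 : 0 < q) (hq1 : q ≤ 1)
    (ha_nonneg : ∀ u ≥ 0, 0 ≤ a u) (hs : 0 < ‖ξ‖ + ‖ζ‖) :
    ∫ t in (0:ℝ)..1, a ‖t • ξ + (1 - t) • ζ‖ / ‖t • ξ + (1 - t) • ζ‖ ≤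
      2 / q * (a (‖ξ‖ + ‖ζ‖) / (‖ξ‖ + ‖ζ‖)) := by
  set s := ‖ξ‖ + ‖ζ‖
  have hsq : 0 < s ^ q := rpow_pos_of_pos hs q
  have hsum : ‖ξ‖ ^ q + ‖ζ‖ ^ q ≤ 2 * s ^ q := by
    have hξ := rpow_le_rpow (norm_nonneg ξ) (le_add_of_nonneg_right (norm_nonneg ζ)) hq0.le
    have hζ := rpow_le_rpow (norm_nonneg ζ) (le_add_of_nonneg_left (norm_nonneg ξ)) hq0.le
    linarith
  calc ∫ t in (0:ℝ)..1, a ‖t • ξ + (1 - t) • ζ‖ / ‖t • ξ + (1 - t) • ζ‖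
      ≤ ∫ t in (0:ℝ)..1, a s / s ^ q * |t * ‖ξ‖ - (1 - t) * ‖ζ‖| ^ (q - 1) := by
        refine intervalIntegral.integral_mono_ae_restrict zero_le_one
          (intervalIntegrable_div_norm_segment ha_cont hmono hq0 hq1 ha_nonneg hs)
          ((intervalIntegrable_abs_sub_rpow_s8 hq0 hs).const_mul _) ?_
        filter_upwards [ae_restrict_mem measurableSet_Icc,
          ae_restrict_of_ae (ae_div_norm_segment_le hmono hq1 ha_nonneg hs)] with t ht hle
        exact hle ht
    _ = a s / s ^ q * ((‖ξ‖ ^ q + ‖ζ‖ ^ q) / (q * s)) := by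
        rw [intervalIntegral.integral_const_mul,
          integral_abs_sub_rpow_s8 hq0 (norm_nonneg _) (norm_nonneg _) hs]
    _ ≤ a s / s ^ q * (2 * s ^ q / (q * s)) := by
        gcongr
        exact div_nonneg (ha_nonneg _ hs.le) hsq.le
    _ = 2 / q * (a s / s) := by field_simp

lemma le_integral_div_norm_segment (hanti : AntitoneOn (fun u => a u / u ^ q) (Ioi 0))
    (hq : 1 < q) (ha_zero : a 0 = 0) (ha_nonneg : ∀ u ≥ 0, 0 ≤ a u) (hs : 0 < ‖ξ‖ + ‖ζ‖)
    (hint : IntervalIntegrable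
      (fun t => a ‖t • ξ + (1 - t) • ζ‖ / ‖t • ξ + (1 - t) • ζ‖) volume 0 1) :
    1 / (2 ^ (q - 1) * q) * (a (‖ξ‖ + ‖ζ‖) / (‖ξ‖ + ‖ζ‖)) ≤
      ∫ t in (0:ℝ)..1, a ‖t • ξ + (1 - t) • ζ‖ / ‖t • ξ + (1 - t) • ζ‖ := by
  set s := ‖ξ‖ + ‖ζ‖
  have hq0 : 0 < q := by linarith
  have hsq : 0 < s ^ q := rpow_pos_of_pos hs q
  have h2q : 0 < (2:ℝ) ^ (q - 1) := by positivity
  calc 1 / (2 ^ (q - 1) * q) * (a s / s) = a s / s ^ q * (s ^ q / 2 ^ (q - 1) / (q * s)) := by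
        field_simp
    _ ≤ a s / s ^ q * ((‖ξ‖ ^ q + ‖ζ‖ ^ q) / (q * s)) := by
        gcongr
        · exact div_nonneg (ha_nonneg _ hs.le) hsq.le
        · exact (div_le_iff₀' h2q).2
            (rpow_add_le_two_rpow_mul_add_rpow (norm_nonneg _) (norm_nonneg _) hq.le)
    _ = ∫ t in (0:ℝ)..1, a s / s ^ q * |t * ‖ξ‖ - (1 - t) * ‖ζ‖| ^ (q - 1) := by
        rw [intervalIntegral.integral_const_mul,
          integral_abs_sub_rpow_s8 hq0 (norm_nonneg _) (norm_nonneg _) hs]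
    _ ≤ ∫ t in (0:ℝ)..1, a ‖t • ξ + (1 - t) • ζ‖ / ‖t • ξ + (1 - t) • ζ‖ :=
        intervalIntegral.integral_mono_on zero_le_one
          ((intervalIntegrable_abs_sub_rpow_s8 hq0 hs).const_mul _) hint fun t ht =>
            le_div_of_antitoneOn_div_rpow hanti hq ha_zero (ha_nonneg _ hs.le) (abs_nonneg _)
              (abs_sub_le_norm_segment ξ ζ ht) (norm_segment_le ξ ζ ht)

end SegmentIntegral

theorem stmt_8_general
    (a : ℝ → ℝ) (a₀ a₁ : ℝ)
    (ha_cont : ContinuousOn a (Set.Ici 0))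
    (ha_diff : ∀ t ∈ Set.Ioi (0:ℝ), DifferentiableAt ℝ a t)
    (ha_zero : a 0 = 0)
    (ha_pos : ∀ t > 0, 0 < a t)
    (ha₀_pos : 0 < a₀) (ha₀_lt : a₀ < 1) (ha₁_gt : 1 < a₁)
    (hcond : ∀ t > 0, a₀ ≤ t * deriv a t / a t ∧ t * deriv a t / a t ≤ a₁)
    (n : ℕ) :
    ∃ c C : ℝ, 0 < c ∧ 0 < C ∧
      ∀ ξ ζ : EuclideanSpace ℝ (Fin n), (ξ, ζ) ≠ 0 →
        c * (a (‖ξ‖ + ‖ζ‖) / (‖ξ‖ + ‖ζ‖)) ≤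
            (∫ t in (0:ℝ)..1, a ‖t • ξ + (1 - t) • ζ‖ / ‖t • ξ + (1 - t) • ζ‖) ∧
        (∫ t in (0:ℝ)..1, a ‖t • ξ + (1 - t) • ζ‖ / ‖t • ξ + (1 - t) • ζ‖) ≤
            C * (a (‖ξ‖ + ‖ζ‖) / (‖ξ‖ + ‖ζ‖)) := by
  have hmono : MonotoneOn (fun u => a u / u ^ a₀) (Ioi 0) :=
    monotoneOn_div_rpow ha_diff fun t ht => (le_div_iff₀ (ha_pos t ht)).1 (hcond t ht).1
  have hanti : AntitoneOn (fun u => a u / u ^ a₁) (Ioi 0) :=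
    antitoneOn_div_rpow ha_diff fun t ht => (div_le_iff₀ (ha_pos t ht)).1 (hcond t ht).2
  have ha_nonneg : ∀ u ≥ 0, 0 ≤ a u := fun u hu =>
    hu.eq_or_lt.elim (fun h => h ▸ ha_zero.ge) fun h => (ha_pos u h).le
  refine ⟨1 / (2 ^ (a₁ - 1) * a₁), 2 / a₀, by positivity, by positivity, fun ξ ζ hne => ?_⟩
  have hs : 0 < ‖ξ‖ + ‖ζ‖ := by
    rcases not_and_or.1 (Prod.mk_eq_zero.not.1 hne) with hξ | hζ
    · exact add_pos_of_pos_of_nonneg (norm_pos_iff.2 hξ) (norm_nonneg ζ)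
    · exact add_pos_of_nonneg_of_pos (norm_nonneg ξ) (norm_pos_iff.2 hζ)
  exact ⟨le_integral_div_norm_segment hanti ha₁_gt ha_zero ha_nonneg hs
      (intervalIntegrable_div_norm_segment ha_cont hmono ha₀_pos ha₀_lt.le ha_nonneg hs),
    integral_div_norm_segment_le ha_cont hmono ha₀_pos ha₀_lt.le ha_nonneg hs⟩

/-- Lemma 2.5: there are positive constants `c` (depending only on `n, a₁`) and `C`
(depending only on `n, a₀`) such that for all `(ξ, ζ) ≠ (0,0)` in `ℝ^{2n}`,
`c·a(|ξ|+|ζ|)/(|ξ|+|ζ|) ≤ ∫₀¹ a(|θ_t|)/|θ_t| dt ≤ C·a(|ξ|+|ζ|)/(|ξ|+|ζ|)`,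
where `θ_t = tξ + (1-t)ζ`. -/
theorem stmt_8
    (a : ℝ → ℝ) (a₀ a₁ : ℝ)
    (ha_cont : ContinuousOn a (Set.Ici 0))
    (ha_diff : ∀ t ∈ Set.Ioi (0:ℝ), DifferentiableAt ℝ a t)
    (ha_deriv_cont : ContinuousOn (deriv a) (Set.Ioi 0))
    (ha_zero : a 0 = 0)
    (ha_pos : ∀ t > 0, 0 < a t)
    (ha₀_pos : 0 < a₀) (ha₀_lt : a₀ < 1) (ha₁_gt : 1 < a₁)
    (hcond : ∀ t > 0, a₀ ≤ t * deriv a t / a t ∧ t * deriv a t / a t ≤ a₁)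
    (n : ℕ) (hn : 2 ≤ n) :
    ∃ c C : ℝ, 0 < c ∧ 0 < C ∧
      ∀ ξ ζ : EuclideanSpace ℝ (Fin n), (ξ, ζ) ≠ 0 →
        c * (a (‖ξ‖ + ‖ζ‖) / (‖ξ‖ + ‖ζ‖)) ≤
            (∫ t in (0:ℝ)..1, a ‖t • ξ + (1 - t) • ζ‖ / ‖t • ξ + (1 - t) • ζ‖) ∧
        (∫ t in (0:ℝ)..1, a ‖t • ξ + (1 - t) • ζ‖ / ‖t • ξ + (1 - t) • ζ‖) ≤
            C * (a (‖ξ‖ + ‖ζ‖) / (‖ξ‖ + ‖ζ‖)) :=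
  stmt_8_general a a₀ a₁ ha_cont ha_diff ha_zero ha_pos ha₀_pos ha₀_lt ha₁_gt hcond n
end

section
/- For n ≥ 2 there exists a positive constant C, depending only on n and a₀, such that for all X, Y ∈ ℝⁿ: |A(|X|) − A(|Y|)| ≤ C·|X − Y|·a(|X| + |Y|). -/
/-!
The constant is `C = 1`. Positive elasticity `t a'(t) / a(t) ≥ a₀ > 0` makes `a` nondecreasing
on `[0, ∞)`, so `|A(r) - A(s)| = |∫ₛʳ a| ≤ |r - s| · a(max r s) ≤ |r - s| · a(r + s)`, and
`| |X| - |Y| | ≤ |X - Y|`.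
-/

open MeasureTheory Set

lemma monotoneOn_Ici_of_elasticity_nonneg {a : ℝ → ℝ} (hcont : ContinuousOn a (Ici 0))
    (hdiff : ∀ t ∈ Ioi (0 : ℝ), DifferentiableAt ℝ a t) (hpos : ∀ t > 0, 0 < a t)
    (helast : ∀ t > 0, 0 ≤ t * deriv a t / a t) : MonotoneOn a (Ici 0) := by
  refine monotoneOn_of_deriv_nonneg (convex_Ici 0) hcont ?_ ?_ <;> rw [interior_Ici]
  · exact fun t ht => (hdiff t ht).differentiableWithinAt
  · intro t (ht : 0 < t)
    have hat := hpos t ht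
    have := helast t ht
    rw [le_div_iff₀ hat, zero_mul] at this
    exact nonneg_of_mul_nonneg_right this ht

lemma abs_intervalIntegral_sub_le_of_monotoneOn {f : ℝ → ℝ} (hcont : ContinuousOn f (Ici 0))
    (hmono : MonotoneOn f (Ici 0)) (hf₀ : 0 ≤ f 0) {r s : ℝ} (hr : 0 ≤ r) (hs : 0 ≤ s) :
    |(∫ x in 0..r, f x) - ∫ x in 0..s, f x| ≤ |r - s| * f (r + s) := by
  have hint (t : ℝ) (ht : 0 ≤ t) : IntervalIntegrable f volume 0 t :=
    ContinuousOn.intervalIntegrable (hcont.mono (by simp [uIcc_of_le ht, Icc_subset_Ici_self]))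
  rw [intervalIntegral.integral_interval_sub_left (hint r hr) (hint s hs),
    ← Real.norm_eq_abs, mul_comm]
  refine intervalIntegral.norm_integral_le_of_norm_le_const fun x hx => ?_
  rw [uIoc, mem_Ioc] at hx
  have hx₀ : 0 ≤ x := (le_min hs hr).trans hx.1.le
  rw [Real.norm_eq_abs, abs_of_nonneg (hf₀.trans (hmono self_mem_Ici hx₀ hx₀))]
  exact hmono hx₀ (mem_Ici.mpr (by positivity)) (hx.2.trans (max_le (by linarith) (by linarith)))

theorem stmt_10_general
    (a : ℝ → ℝ) (a₀ a₁ : ℝ)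
    (ha_cont : ContinuousOn a (Set.Ici 0))
    (ha_diff : ∀ t ∈ Set.Ioi (0:ℝ), DifferentiableAt ℝ a t)
    (ha_zero : a 0 = 0)
    (ha_pos : ∀ t > 0, 0 < a t)
    (ha₀_pos : 0 < a₀)
    (hcond : ∀ t > 0, a₀ ≤ t * deriv a t / a t ∧ t * deriv a t / a t ≤ a₁)
    (A : ℝ → ℝ) (hA : ∀ t, A t = ∫ s in (0:ℝ)..t, a s)
    (n : ℕ) :
    ∃ C : ℝ, 0 < C ∧
      ∀ X Y : EuclideanSpace ℝ (Fin n),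
        |A ‖X‖ - A ‖Y‖| ≤ C * ‖X - Y‖ * a (‖X‖ + ‖Y‖) := by
  have hmono : MonotoneOn a (Ici 0) := monotoneOn_Ici_of_elasticity_nonneg ha_cont ha_diff
    ha_pos fun t ht => ha₀_pos.le.trans (hcond t ht).1
  refine ⟨1, one_pos, fun X Y => ?_⟩
  have ha_sum : 0 ≤ a (‖X‖ + ‖Y‖) :=
    ha_zero ▸ hmono self_mem_Ici (mem_Ici.mpr (by positivity)) (by positivity)
  rw [hA, hA, one_mul]
  calc _ ≤ |‖X‖ - ‖Y‖| * a (‖X‖ + ‖Y‖) :=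
        abs_intervalIntegral_sub_le_of_monotoneOn ha_cont hmono ha_zero.ge
          (norm_nonneg X) (norm_nonneg Y)
    _ ≤ ‖X - Y‖ * a (‖X‖ + ‖Y‖) :=
        mul_le_mul_of_nonneg_right (abs_norm_sub_norm_le X Y) ha_sum

/-- Inequality (2.2): there is `C > 0` (depending only on `n` and `a₀`) with
`|A(|X|) - A(|Y|)| ≤ C·|X - Y|·a(|X| + |Y|)` for all `X, Y ∈ ℝⁿ`. -/
theorem stmt_10
    (a : ℝ → ℝ) (a₀ a₁ : ℝ)
    (ha_cont : ContinuousOn a (Set.Ici 0))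
    (ha_diff : ∀ t ∈ Set.Ioi (0:ℝ), DifferentiableAt ℝ a t)
    (ha_deriv_cont : ContinuousOn (deriv a) (Set.Ioi 0))
    (ha_zero : a 0 = 0)
    (ha_pos : ∀ t > 0, 0 < a t)
    (ha₀_pos : 0 < a₀) (ha₀_lt : a₀ < 1) (ha₁_gt : 1 < a₁)
    (hcond : ∀ t > 0, a₀ ≤ t * deriv a t / a t ∧ t * deriv a t / a t ≤ a₁)
    (A : ℝ → ℝ) (hA : ∀ t, A t = ∫ s in (0:ℝ)..t, a s)
    (n : ℕ) (hn : 2 ≤ n) :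
    ∃ C : ℝ, 0 < C ∧
      ∀ X Y : EuclideanSpace ℝ (Fin n),
        |A ‖X‖ - A ‖Y‖| ≤ C * ‖X - Y‖ * a (‖X‖ + ‖Y‖) :=
  stmt_10_general a a₀ a₁ ha_cont ha_diff ha_zero ha_pos ha₀_pos hcond A hA n
end

section
/- For every δ ∈ (0, 1) and all s, t ≥ 0, one has s·a(t) ≤ ((1 + a₁)/δ^{a₁(1+a₁)})·A(s) + (1 + a₁)·δ^{a₀+1}·A(t). -/
/-!
The condition `t a'(t) ≤ a₁ a(t)` makes `a(t) / t ^ a₁` nonincreasing, which gives the doubling-type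
bound `a(s / c) ≤ a(s) / c ^ a₁` for `0 < c ≤ 1`, and, comparing `a` on `[0, t]` with
`a(t) (u / t) ^ a₁`, the bound `t a(t) ≤ (1 + a₁) A(t)`; the lower condition only makes `a`
nondecreasing. With `c = δ ^ (1 + a₁)`: if `s ≤ c t` then `s a(t) ≤ c t a(t) ≤ (1 + a₁) c A(t)`;
otherwise `t < s / c`, so `a(t) ≤ a(s / c) ≤ a(s) / c ^ a₁` and `s a(t) ≤ (1 + a₁) A(s) / c ^ a₁`.
-/

open Real Set

section

variable {a : ℝ → ℝ} {p : ℝ}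

theorem antitoneOn_div_rpow_of_mul_deriv_le (hdiff : ∀ t > 0, DifferentiableAt ℝ a t)
    (hle : ∀ t > 0, t * deriv a t ≤ p * a t) : AntitoneOn (fun t => a t / t ^ p) (Ioi 0) := by
  refine antitoneOn_of_hasDerivWithinAt_nonpos (convex_Ioi 0)
    (f' := fun t => t ^ (-p - 1) * (t * deriv a t - p * a t)) ?_ (fun t ht => ?_) (fun t ht => ?_)
  · intro t ht
    exact ((hdiff t ht).continuousAt.div (continuousAt_rpow_const t p (Or.inl (ne_of_gt ht)))
      (rpow_pos_of_pos ht p).ne').continuousWithinAt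
  · rw [interior_Ioi] at ht ⊢
    have ht' : (0 : ℝ) < t := ht
    have hpow : HasDerivAt (fun u => u ^ (-p)) (-p * t ^ (-p - 1)) t :=
      hasDerivAt_rpow_const (Or.inl ht'.ne')
    have hsplit : t ^ (-p) = t * t ^ (-p - 1) := by
      rw [rpow_sub ht', rpow_one, mul_div_cancel₀ _ ht'.ne']
    have heq : (fun u => a u / u ^ p) =ᶠ[nhds t] fun u => a u * u ^ (-p) := by
      filter_upwards [Ioi_mem_nhds ht'] with u hu
      rw [rpow_neg (le_of_lt hu), div_eq_mul_inv]
    refine (((hdiff t ht').hasDerivAt.mul hpow).congr_of_eventuallyEq heq).congr_deriv ?_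
      |>.hasDerivWithinAt
    rw [hsplit]; ring
  · rw [interior_Ioi] at ht
    exact mul_nonpos_of_nonneg_of_nonpos (rpow_nonneg (le_of_lt ht) _)
      (sub_nonpos.2 (hle t ht))

theorem apply_div_le_of_antitoneOn_div_rpow (hanti : AntitoneOn (fun t => a t / t ^ p) (Ioi 0))
    {s c : ℝ} (hs : 0 < s) (hc₀ : 0 < c) (hc₁ : c ≤ 1) : a (s / c) ≤ a s / c ^ p := by
  have hsc : s ≤ s / c := le_div_self hs.le hc₀ hc₁
  have h := hanti hs (hs.trans_le hsc) hsc
  have hsp := rpow_pos_of_pos hs p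
  have hcp := rpow_pos_of_pos hc₀ p
  simp only [div_rpow hs.le hc₀.le] at h
  rw [div_div_eq_mul_div, div_le_div_iff_of_pos_right hsp] at h
  rwa [le_div_iff₀ hcp]

theorem mul_apply_le_integral_of_antitoneOn_div_rpow (hp : 0 < p)
    (hanti : AntitoneOn (fun t => a t / t ^ p) (Ioi 0)) (hcont : ContinuousOn a (Ici 0))
    (h₀ : 0 ≤ a 0) {t : ℝ} (ht : 0 ≤ t) : t * a t ≤ (1 + p) * ∫ u in (0)..t, a u := by
  rcases ht.eq_or_lt with rfl | ht
  · simp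
  have hlower : ∀ u ∈ Icc 0 t, u ^ p * (a t / t ^ p) ≤ a u := by
    rintro u ⟨hu₀, hut⟩
    rcases hu₀.eq_or_lt with rfl | hu₀
    · rwa [zero_rpow hp.ne', zero_mul]
    · have h := hanti hu₀ ht hut
      rwa [le_div_iff₀' (rpow_pos_of_pos hu₀ p)] at h
  have hcomp : ∫ u in (0)..t, u ^ p * (a t / t ^ p) ≤ ∫ u in (0)..t, a u :=
    intervalIntegral.integral_mono_on ht.le
      (((continuous_id.rpow_const fun _ => Or.inr hp.le).mul continuous_const).intervalIntegrable
        0 t)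
      ((hcont.mono Icc_subset_Ici_self).intervalIntegrable_of_Icc ht.le) hlower
  have hval : ∫ u in (0)..t, u ^ p * (a t / t ^ p) = t * a t / (1 + p) := by
    rw [intervalIntegral.integral_mul_const, integral_rpow (Or.inl (by linarith)),
      zero_rpow (by linarith), rpow_add ht, rpow_one]
    field_simp
    ring
  rw [hval, div_le_iff₀' (by linarith)] at hcomp
  exact hcomp

theorem mul_apply_le_of_antitoneOn_div_rpow (hp : 0 < p)
    (hanti : AntitoneOn (fun t => a t / t ^ p) (Ioi 0)) (hcont : ContinuousOn a (Ici 0))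
    (hmono : MonotoneOn a (Ici 0)) (hnonneg : ∀ t ≥ 0, 0 ≤ a t) {c s t : ℝ} (hc₀ : 0 < c)
    (hc₁ : c ≤ 1) (hs : 0 ≤ s) (ht : 0 ≤ t) :
    s * a t ≤ (1 + p) / c ^ p * (∫ u in (0)..s, a u) + (1 + p) * c * ∫ u in (0)..t, a u := by
  have hint_nonneg : ∀ x ≥ (0 : ℝ), 0 ≤ ∫ u in (0)..x, a u := fun x hx =>
    intervalIntegral.integral_nonneg hx fun u hu => hnonneg u hu.1
  have hbound : ∀ {x : ℝ}, 0 ≤ x → x * a x ≤ (1 + p) * ∫ u in (0)..x, a u := fun hx =>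
    mul_apply_le_integral_of_antitoneOn_div_rpow hp hanti hcont (hnonneg 0 le_rfl) hx
  rcases le_or_gt s (c * t) with hst | hst
  · calc s * a t ≤ c * (t * a t) := by
          rw [← mul_assoc]; exact mul_le_mul_of_nonneg_right hst (hnonneg t ht)
      _ ≤ c * ((1 + p) * ∫ u in (0)..t, a u) := mul_le_mul_of_nonneg_left (hbound ht) hc₀.le
      _ ≤ _ := by
          have : 0 ≤ (1 + p) / c ^ p * ∫ u in (0)..s, a u :=
            mul_nonneg (div_nonneg (by linarith) (rpow_nonneg hc₀.le p)) (hint_nonneg s hs)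
          linarith
  · have hs₀ : 0 < s := (mul_nonneg hc₀.le ht).trans_lt hst
    have hts : t ≤ s / c := by rw [le_div_iff₀ hc₀]; linarith
    have hat : a t ≤ a s / c ^ p :=
      (hmono ht (div_nonneg hs hc₀.le) hts).trans
        (apply_div_le_of_antitoneOn_div_rpow hanti hs₀ hc₀ hc₁)
    calc s * a t ≤ s * a s / c ^ p := by
          rw [mul_div_assoc]; exact mul_le_mul_of_nonneg_left hat hs
      _ ≤ (1 + p) * (∫ u in (0)..s, a u) / c ^ p :=
          div_le_div_of_nonneg_right (hbound hs) (rpow_nonneg hc₀.le p)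
      _ ≤ _ := by
          have : 0 ≤ (1 + p) * c * ∫ u in (0)..t, a u :=
            mul_nonneg (by nlinarith) (hint_nonneg t ht)
          rw [div_mul_eq_mul_div₀]; linarith

end

theorem stmt_11_general
    (a : ℝ → ℝ) (a₀ a₁ : ℝ)
    (ha_cont : ContinuousOn a (Set.Ici 0))
    (ha_diff : ∀ t ∈ Set.Ioi (0:ℝ), DifferentiableAt ℝ a t)
    (ha_zero : a 0 = 0)
    (ha_pos : ∀ t > 0, 0 < a t)
    (ha₀_pos : 0 < a₀)
    (hcond : ∀ t > 0, a₀ ≤ t * deriv a t / a t ∧ t * deriv a t / a t ≤ a₁)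
    (A : ℝ → ℝ) (hA : ∀ t, A t = ∫ s in (0:ℝ)..t, a s) :
    ∀ δ ∈ Set.Ioo (0:ℝ) 1, ∀ s ≥ (0:ℝ), ∀ t ≥ (0:ℝ),
      s * a t ≤ ((1 + a₁) / δ ^ (a₁ * (1 + a₁))) * A s
        + (1 + a₁) * δ ^ (a₀ + 1) * A t := by
  rintro δ ⟨hδ₀, hδ₁⟩ s hs t ht
  have ha₀₁ : a₀ ≤ a₁ := (hcond 1 one_pos).1.trans (hcond 1 one_pos).2
  have hnonneg : ∀ t ≥ (0 : ℝ), 0 ≤ a t := fun t ht =>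
    ht.eq_or_lt.elim (fun h => h ▸ ha_zero.ge) fun h => (ha_pos t h).le
  have hmono : MonotoneOn a (Ici 0) := by
    refine monotoneOn_of_deriv_nonneg (convex_Ici 0) ha_cont
      (fun t ht => (ha_diff t (by simpa using ht)).differentiableWithinAt) fun t ht => ?_
    rw [interior_Ici] at ht
    have h := ha₀_pos.trans_le (hcond t ht).1
    rw [div_pos_iff_of_pos_right (ha_pos t ht)] at h
    exact (pos_of_mul_pos_right h (le_of_lt ht)).le
  have hanti : AntitoneOn (fun t => a t / t ^ a₁) (Ioi 0) :=
    antitoneOn_div_rpow_of_mul_deriv_le ha_diff fun t ht =>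
      (div_le_iff₀ (ha_pos t ht)).1 (hcond t ht).2
  have key := mul_apply_le_of_antitoneOn_div_rpow (ha₀_pos.trans_le ha₀₁) hanti ha_cont hmono
    hnonneg (rpow_pos_of_pos hδ₀ (1 + a₁)) (rpow_le_one hδ₀.le hδ₁.le (by linarith)) hs ht
  rw [← rpow_mul hδ₀.le, mul_comm (1 + a₁) a₁, ← hA, ← hA] at key
  have hAt : 0 ≤ A t := hA t ▸ intervalIntegral.integral_nonneg ht fun u hu => hnonneg u hu.1
  have hpow : δ ^ (1 + a₁) ≤ δ ^ (a₀ + 1) :=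
    rpow_le_rpow_of_exponent_ge hδ₀ hδ₁.le (by linarith)
  refine key.trans (add_le_add_right (mul_le_mul_of_nonneg_right ?_ hAt) _)
  exact mul_le_mul_of_nonneg_left hpow (by linarith)

/-- Inequality (2.3): for every `δ ∈ (0,1)` and all `s, t ≥ 0`,
`s·a(t) ≤ ((1+a₁)/δ^{a₁(1+a₁)})·A(s) + (1+a₁)·δ^{a₀+1}·A(t)`. -/
theorem stmt_11
    (a : ℝ → ℝ) (a₀ a₁ : ℝ)
    (ha_cont : ContinuousOn a (Set.Ici 0))
    (ha_diff : ∀ t ∈ Set.Ioi (0:ℝ), DifferentiableAt ℝ a t)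
    (ha_deriv_cont : ContinuousOn (deriv a) (Set.Ioi 0))
    (ha_zero : a 0 = 0)
    (ha_pos : ∀ t > 0, 0 < a t)
    (ha₀_pos : 0 < a₀) (ha₀_lt : a₀ < 1) (ha₁_gt : 1 < a₁)
    (hcond : ∀ t > 0, a₀ ≤ t * deriv a t / a t ∧ t * deriv a t / a t ≤ a₁)
    (A : ℝ → ℝ) (hA : ∀ t, A t = ∫ s in (0:ℝ)..t, a s) :
    ∀ δ ∈ Set.Ioo (0:ℝ) 1, ∀ s ≥ (0:ℝ), ∀ t ≥ (0:ℝ),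
      s * a t ≤ ((1 + a₁) / δ ^ (a₁ * (1 + a₁))) * A s
        + (1 + a₁) * δ ^ (a₀ + 1) * A t :=
  stmt_11_general a a₀ a₁ ha_cont ha_diff ha_zero ha_pos ha₀_pos hcond A hA
end

section
/- For n ≥ 2 there exists a positive constant C, depending only on n, a₀ and a₁, such that for every δ ∈ (0, 1) and all X, Y ∈ ℝⁿ: |A(|X|) − A(|Y|)| ≤ (C/δ^{a₁(1+a₁)})·A(|X − Y|) + C·δ^{a₀+1}·A(|X| + |Y|). -/
/-!
Both growth conditions are read off the logarithmic derivative `t a'(t) / a(t) ∈ [a₀, a₁]`: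
the lower bound makes `a` nondecreasing, the upper bound makes `t ↦ t^{-a₁} a(t)` nonincreasing
and `(1 + a₁) A(t) - t a(t)` nondecreasing, so `t a(t) ≤ (1 + a₁) A(t)`. Now
`|A(|X|) - A(|Y|)| ≤ a(S) d` with `S = |X| + |Y|`, `d = |X - Y|`, and with `ε = δ^{a₀+1}`:
if `d < ε S` this is at most `ε S a(S) ≤ (1 + a₁) ε A(S)`; otherwise `S ≤ d / ε`, and the
doubling-type bound `a(d / ε) ≤ ε^{-a₁} a(d)` gives `a(S) d ≤ (1 + a₁) ε^{-a₁} A(d)`.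
-/

open Real MeasureTheory Set intervalIntegral

section GrowthBounds

variable {a : ℝ → ℝ} {p : ℝ}

theorem monotoneOn_Ici_of_mul_le_mul_deriv (hc : ContinuousOn a (Ici 0))
    (hd : ∀ t > 0, DifferentiableAt ℝ a t) (ha : ∀ t > 0, 0 ≤ a t) {q : ℝ} (hq : 0 ≤ q)
    (hq' : ∀ t > 0, q * a t ≤ t * deriv a t) : MonotoneOn a (Ici 0) := by
  refine monotoneOn_of_deriv_nonneg (convex_Ici 0) hc ?_ ?_ <;> rw [interior_Ici]
  · exact fun t ht => (hd t ht).differentiableWithinAt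
  · intro t ht
    have ht : (0 : ℝ) < t := ht
    nlinarith [hq' t ht, mul_nonneg hq (ha t ht)]

theorem antitoneOn_rpow_neg_mul (hd : ∀ t > 0, DifferentiableAt ℝ a t)
    (hp : ∀ t > 0, t * deriv a t ≤ p * a t) :
    AntitoneOn (fun t => t ^ (-p) * a t) (Ioi 0) := by
  have hderiv : ∀ t > 0, HasDerivAt (fun t => t ^ (-p) * a t)
      (-p * t ^ (-p - 1) * a t + t ^ (-p) * deriv a t) t := fun t ht =>
    (hasDerivAt_rpow_const (Or.inl ht.ne')).mul (hd t ht).hasDerivAt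
  refine antitoneOn_of_deriv_nonpos (convex_Ioi 0)
    (fun t ht => (hderiv t ht).continuousAt.continuousWithinAt) ?_ ?_ <;> rw [interior_Ioi]
  · exact fun t ht => (hderiv t ht).differentiableAt.differentiableWithinAt
  · intro t ht
    have ht : (0 : ℝ) < t := ht
    rw [(hderiv t ht).deriv, show t ^ (-p) = t ^ (-p - 1) * t by
      rw [← rpow_add_one ht.ne']; ring_nf]
    nlinarith [hp t ht, rpow_pos_of_pos ht (-p - 1)]

theorem le_rpow_div_mul_of_le (hd : ∀ t > 0, DifferentiableAt ℝ a t)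
    (hp : ∀ t > 0, t * deriv a t ≤ p * a t) {s t : ℝ} (hs : 0 < s) (hst : s ≤ t) :
    a t ≤ (t / s) ^ p * a s := by
  have ht : 0 < t := hs.trans_le hst
  calc a t = t ^ p * (t ^ (-p) * a t) := by
        rw [← mul_assoc, ← rpow_add ht, add_neg_cancel, rpow_zero, one_mul]
    _ ≤ t ^ p * (s ^ (-p) * a s) :=
        mul_le_mul_of_nonneg_left (antitoneOn_rpow_neg_mul hd hp hs ht hst) (rpow_nonneg ht.le p)
    _ = (t / s) ^ p * a s := by
        rw [div_rpow ht.le hs.le, rpow_neg hs.le, div_eq_mul_inv]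
        ring

theorem intervalIntegrable_of_continuousOn_Ici (hc : ContinuousOn a (Ici 0)) {x y : ℝ}
    (hx : 0 ≤ x) (hy : 0 ≤ y) : IntervalIntegrable a volume x y :=
  (hc.mono fun _ hz => le_trans (le_inf hx hy) hz.1).intervalIntegrable

theorem mul_le_one_add_mul_integral (hc : ContinuousOn a (Ici 0))
    (hd : ∀ t > 0, DifferentiableAt ℝ a t) (hp : ∀ t > 0, t * deriv a t ≤ p * a t)
    {t : ℝ} (ht : 0 ≤ t) : t * a t ≤ (1 + p) * ∫ s in (0 : ℝ)..t, a s := by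
  set h : ℝ → ℝ := fun x => (1 + p) * (∫ s in (0 : ℝ)..x, a s) - x * a x
  suffices MonotoneOn h (Icc 0 t) by
    simpa [h] using this (left_mem_Icc.2 ht) (right_mem_Icc.2 ht) ht
  have hderiv : ∀ x > 0, HasDerivAt h ((1 + p) * a x - (1 * a x + x * deriv a x)) x := by
    intro x hx
    have hprim : HasDerivAt (fun x => ∫ s in (0 : ℝ)..x, a s) (a x) x :=
      integral_hasDerivAt_right (intervalIntegrable_of_continuousOn_Ici hc le_rfl hx.le)
        ((hc.mono Ioi_subset_Ici_self).stronglyMeasurableAtFilter isOpen_Ioi x hx)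
        (hc.continuousAt (Ici_mem_nhds hx))
    exact (hprim.const_mul (1 + p)).sub ((hasDerivAt_id x).mul (hd x hx).hasDerivAt)
  have hcont : ContinuousOn a (Icc 0 t) := hc.mono Icc_subset_Ici_self
  have hprim_cont : ContinuousOn (fun x => ∫ s in (0 : ℝ)..x, a s) (Icc 0 t) := by
    simpa [uIcc_of_le ht] using continuousOn_primitive_interval'
      (intervalIntegrable_of_continuousOn_Ici hc le_rfl ht) left_mem_uIcc
  refine monotoneOn_of_deriv_nonneg (convex_Icc 0 t)
    ((continuousOn_const.mul hprim_cont).sub (continuousOn_id.mul hcont)) ?_ ?_ <;>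
    rw [interior_Icc]
  · exact fun x hx => (hderiv x hx.1).differentiableAt.differentiableWithinAt
  · intro x hx
    rw [(hderiv x hx.1).deriv]
    linarith [hp x hx.1]

theorem abs_integral_sub_integral_le (hc : ContinuousOn a (Ici 0))
    (hmono : MonotoneOn a (Ici 0)) (hnonneg : ∀ t, 0 ≤ t → 0 ≤ a t) {u v R : ℝ}
    (hu : 0 ≤ u) (hv : 0 ≤ v) (huR : u ≤ R) (hvR : v ≤ R) :
    |(∫ s in (0 : ℝ)..u, a s) - ∫ s in (0 : ℝ)..v, a s| ≤ a R * |u - v| := by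
  rw [integral_interval_sub_left (intervalIntegrable_of_continuousOn_Ici hc le_rfl hu)
    (intervalIntegrable_of_continuousOn_Ici hc le_rfl hv), ← Real.norm_eq_abs]
  refine norm_integral_le_of_norm_le_const fun x hx => ?_
  have hx0 : 0 ≤ x := (le_min hv hu).trans hx.1.le
  rw [Real.norm_of_nonneg (hnonneg x hx0)]
  exact hmono hx0 (hx0.trans (hx.2.trans (max_le hvR huR))) (hx.2.trans (max_le hvR huR))

theorem abs_integral_sub_integral_le_of_growth (hc : ContinuousOn a (Ici 0))
    (hdiff : ∀ t > 0, DifferentiableAt ℝ a t) (hp₀ : 0 ≤ p)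
    (hp : ∀ t > 0, t * deriv a t ≤ p * a t) (hmono : MonotoneOn a (Ici 0))
    (hnonneg : ∀ t, 0 ≤ t → 0 ≤ a t) {r r' d ε : ℝ} (hr : 0 ≤ r) (hr' : 0 ≤ r')
    (hrd : |r - r'| ≤ d) (hε : 0 < ε) (hε₁ : ε ≤ 1) :
    |(∫ s in (0 : ℝ)..r, a s) - ∫ s in (0 : ℝ)..r', a s| ≤
      (1 + p) * ε ^ (-p) * (∫ s in (0 : ℝ)..d, a s)
        + (1 + p) * ε * ∫ s in (0 : ℝ)..(r + r'), a s := by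
  set S := r + r'
  have hS : 0 ≤ S := add_nonneg hr hr'
  have hd : 0 ≤ d := (abs_nonneg _).trans hrd
  have hp₁ : 0 ≤ 1 + p := by linarith
  have hint_nonneg : ∀ x, 0 ≤ x → 0 ≤ ∫ s in (0 : ℝ)..x, a s := fun x hx =>
    integral_nonneg hx fun y hy => hnonneg y hy.1
  have hinc : |(∫ s in (0 : ℝ)..r, a s) - ∫ s in (0 : ℝ)..r', a s| ≤ a S * d :=
    (abs_integral_sub_integral_le hc hmono hnonneg hr hr' (by linarith) (by linarith)).trans
      (mul_le_mul_of_nonneg_left hrd (hnonneg S hS))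
  rcases lt_or_ge d (ε * S) with hsmall | hlarge
  · have : a S * d ≤ (1 + p) * ε * ∫ s in (0 : ℝ)..S, a s := by
      calc a S * d ≤ a S * (ε * S) := mul_le_mul_of_nonneg_left hsmall.le (hnonneg S hS)
        _ = ε * (S * a S) := by ring
        _ ≤ ε * ((1 + p) * ∫ s in (0 : ℝ)..S, a s) :=
            mul_le_mul_of_nonneg_left (mul_le_one_add_mul_integral hc hdiff hp hS) hε.le
        _ = (1 + p) * ε * ∫ s in (0 : ℝ)..S, a s := by ring
    linarith [mul_nonneg (mul_nonneg hp₁ (rpow_nonneg hε.le (-p))) (hint_nonneg d hd)]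
  · have : a S * d ≤ (1 + p) * ε ^ (-p) * ∫ s in (0 : ℝ)..d, a s := by
      rcases hd.eq_or_lt with rfl | hdpos
      · simp
      have hSd : S ≤ d / ε := by rw [le_div_iff₀ hε]; linarith
      have hdd : d ≤ d / ε := le_div_self hd hε hε₁
      have hscale : a (d / ε) ≤ ε ^ (-p) * a d := by
        have := le_rpow_div_mul_of_le hdiff hp hdpos hdd
        rwa [div_div_cancel_left' hdpos.ne', inv_rpow hε.le, ← rpow_neg hε.le] at this
      calc a S * d ≤ ε ^ (-p) * a d * d := by
            gcongr
            exact (hmono hS (hS.trans hSd) hSd).trans hscale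
        _ = ε ^ (-p) * (d * a d) := by ring
        _ ≤ ε ^ (-p) * ((1 + p) * ∫ s in (0 : ℝ)..d, a s) :=
            mul_le_mul_of_nonneg_left (mul_le_one_add_mul_integral hc hdiff hp hd)
              (rpow_nonneg hε.le _)
        _ = (1 + p) * ε ^ (-p) * ∫ s in (0 : ℝ)..d, a s := by ring
    linarith [mul_nonneg (mul_nonneg hp₁ hε.le) (hint_nonneg S hS)]

end GrowthBounds

theorem stmt_12_general
    (a : ℝ → ℝ) (a₀ a₁ : ℝ)
    (ha_cont : ContinuousOn a (Set.Ici 0))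
    (ha_diff : ∀ t ∈ Set.Ioi (0:ℝ), DifferentiableAt ℝ a t)
    (ha_zero : a 0 = 0)
    (ha_pos : ∀ t > 0, 0 < a t)
    (ha₀_pos : 0 < a₀)
    (hcond : ∀ t > 0, a₀ ≤ t * deriv a t / a t ∧ t * deriv a t / a t ≤ a₁)
    (A : ℝ → ℝ) (hA : ∀ t, A t = ∫ s in (0:ℝ)..t, a s)
    (n : ℕ) :
    ∃ C : ℝ, 0 < C ∧
      ∀ δ ∈ Set.Ioo (0:ℝ) 1, ∀ X Y : EuclideanSpace ℝ (Fin n),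
        |A ‖X‖ - A ‖Y‖| ≤ (C / δ ^ (a₁ * (1 + a₁))) * A ‖X - Y‖
          + C * δ ^ (a₀ + 1) * A (‖X‖ + ‖Y‖) := by
  obtain rfl : A = fun t => ∫ s in (0 : ℝ)..t, a s := funext hA
  have ha₀₁ : a₀ ≤ a₁ := (hcond 1 one_pos).1.trans (hcond 1 one_pos).2
  have ha₁ : 0 < a₁ := ha₀_pos.trans_le ha₀₁
  have hlower : ∀ t > 0, a₀ * a t ≤ t * deriv a t := fun t ht =>
    (le_div_iff₀ (ha_pos t ht)).1 (hcond t ht).1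
  have hupper : ∀ t > 0, t * deriv a t ≤ a₁ * a t := fun t ht =>
    (div_le_iff₀ (ha_pos t ht)).1 (hcond t ht).2
  have hnonneg : ∀ t, 0 ≤ t → 0 ≤ a t := fun t ht =>
    ht.eq_or_lt.elim (fun h => h ▸ ha_zero.ge) fun h => (ha_pos t h).le
  have hmono := monotoneOn_Ici_of_mul_le_mul_deriv ha_cont ha_diff (fun t ht => (ha_pos t ht).le)
    ha₀_pos.le hlower
  refine ⟨1 + a₁, by linarith, ?_⟩
  rintro δ ⟨hδ₀, hδ₁⟩ X Y
  have key := abs_integral_sub_integral_le_of_growth ha_cont ha_diff ha₁.le hupper hmono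
    hnonneg (norm_nonneg X) (norm_nonneg Y) (abs_norm_sub_norm_le X Y)
    (rpow_pos_of_pos hδ₀ (a₀ + 1)) (rpow_le_one hδ₀.le hδ₁.le (by linarith))
  have hpow : (δ ^ (a₀ + 1)) ^ (-a₁) ≤ 1 / δ ^ (a₁ * (1 + a₁)) := by
    rw [← rpow_mul hδ₀.le, one_div, ← rpow_neg hδ₀.le]
    exact rpow_le_rpow_of_exponent_ge hδ₀ hδ₁.le
      (by nlinarith [mul_le_mul_of_nonneg_left ha₀₁ ha₁.le])
  refine key.trans (add_le_add_left ?_ _)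
  dsimp only
  rw [div_eq_mul_one_div, mul_assoc, mul_assoc]
  exact mul_le_mul_of_nonneg_left (mul_le_mul_of_nonneg_right hpow
    (integral_nonneg (norm_nonneg _) fun y hy => hnonneg y hy.1)) (by linarith)

/-- Inequality (2.4): there is `C > 0` (depending only on `n, a₀, a₁`) such that for all
`δ ∈ (0,1)` and `X, Y ∈ ℝⁿ`,
`|A(|X|) - A(|Y|)| ≤ (C/δ^{a₁(1+a₁)})·A(|X-Y|) + C·δ^{a₀+1}·A(|X|+|Y|)`. -/
theorem stmt_12
    (a : ℝ → ℝ) (a₀ a₁ : ℝ)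
    (ha_cont : ContinuousOn a (Set.Ici 0))
    (ha_diff : ∀ t ∈ Set.Ioi (0:ℝ), DifferentiableAt ℝ a t)
    (ha_deriv_cont : ContinuousOn (deriv a) (Set.Ioi 0))
    (ha_zero : a 0 = 0)
    (ha_pos : ∀ t > 0, 0 < a t)
    (ha₀_pos : 0 < a₀) (ha₀_lt : a₀ < 1) (ha₁_gt : 1 < a₁)
    (hcond : ∀ t > 0, a₀ ≤ t * deriv a t / a t ∧ t * deriv a t / a t ≤ a₁)
    (A : ℝ → ℝ) (hA : ∀ t, A t = ∫ s in (0:ℝ)..t, a s)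
    (n : ℕ) (hn : 2 ≤ n) :
    ∃ C : ℝ, 0 < C ∧
      ∀ δ ∈ Set.Ioo (0:ℝ) 1, ∀ X Y : EuclideanSpace ℝ (Fin n),
        |A ‖X‖ - A ‖Y‖| ≤ (C / δ ^ (a₁ * (1 + a₁))) * A ‖X - Y‖
          + C * δ ^ (a₀ + 1) * A (‖X‖ + ‖Y‖) :=
  stmt_12_general a a₀ a₁ ha_cont ha_diff ha_zero ha_pos ha₀_pos hcond A hA n
end
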